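/- arXiv:2402.17919 — 9 statements merged into one kernel-verified Lean document; each statement's English description precedes it below -/
import Mathlib

section
/- Let α ∈ (0,2), θ > 0, c > 0 and λ ≥ 0. Then the improper integral ∫_{(0,∞)} (e^{−λx} − 1) · (−c e^{−θx}) / (Γ(−α/2) · x^{α/2+1}) dx converges and equals −c·((θ+λ)^{α/2} − θ^{α/2}). -/
open MeasureTheory Set

/-! Integrating by parts against `x ^ (-s)` gives, for `0 < s < 1` and `a > 0`,
`∫₀^∞ (e^{-ax} - 1) x^{-s-1} dx = -(a/s) ∫₀^∞ e^{-ax} x^{-s} dx = -Γ(1-s) a^s / s = Γ(-s) a^s`;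
the boundary terms vanish because `|e^{-ax} - 1| ≤ min (a x) 1`. Since
`(e^{-λx} - 1) e^{-θx} = (e^{-(θ+λ)x} - 1) - (e^{-θx} - 1)`, the Lévy integral is the difference of
this identity at `a = θ + λ` and at `a = θ`. -/

open Filter Real Topology

lemma Real.Gamma_neg_lt_zero {s : ℝ} (hs0 : 0 < s) (hs1 : s < 1) : Gamma (-s) < 0 := by
  have hrec : Gamma (-s + 1) = -s * Gamma (-s) := Gamma_add_one (neg_ne_zero.2 hs0.ne')
  have hpos : 0 < Gamma (-s + 1) := Gamma_pos_of_pos (by linarith)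
  nlinarith

section ExpNegMulSubOne

variable {a s x : ℝ}

lemma abs_exp_neg_mul_sub_one_le (ha : 0 ≤ a) (hx : 0 ≤ x) : |exp (-a * x) - 1| ≤ a * x := by
  have hle : exp (-a * x) ≤ 1 := exp_le_one_iff.2 (by nlinarith)
  have hge : -a * x + 1 ≤ exp (-a * x) := add_one_le_exp _
  exact abs_le.2 ⟨by linarith, by nlinarith⟩

lemma abs_exp_neg_mul_sub_one_le_one (ha : 0 ≤ a) (hx : 0 ≤ x) : |exp (-a * x) - 1| ≤ 1 := by
  have hle : exp (-a * x) ≤ 1 := exp_le_one_iff.2 (by nlinarith)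
  exact abs_le.2 ⟨by linarith [exp_pos (-a * x)], by linarith⟩

lemma norm_exp_neg_mul_sub_one_mul_rpow (t : ℝ) (hx : 0 < x) :
    ‖(exp (-a * x) - 1) * x ^ t‖ = |exp (-a * x) - 1| * x ^ t := by
  rw [norm_mul, Real.norm_eq_abs, Real.norm_of_nonneg (rpow_nonneg hx.le _)]

lemma continuousOn_exp_neg_mul_sub_one_mul_rpow (a t : ℝ) :
    ContinuousOn (fun x : ℝ => (exp (-a * x) - 1) * x ^ t) (Ioi 0) :=
  ((continuous_exp.comp (continuous_const_mul (-a))).sub continuous_const).continuousOn.mul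
    fun x hx => (continuousAt_rpow_const x t (Or.inl (ne_of_gt hx))).continuousWithinAt

lemma integrableOn_exp_neg_mul_sub_one_mul_rpow (ha : 0 ≤ a) (hs0 : 0 < s) (hs1 : s < 1) :
    IntegrableOn (fun x : ℝ => (exp (-a * x) - 1) * x ^ (-s - 1)) (Ioi 0) := by
  have hcont := continuousOn_exp_neg_mul_sub_one_mul_rpow a (-s - 1)
  rw [← Ioc_union_Ioi_eq_Ioi zero_le_one, integrableOn_union]
  constructor
  · have hdom : IntegrableOn (fun x : ℝ => a * x ^ (-s)) (Ioc 0 1) := by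
      rw [integrableOn_Ioc_iff_integrableOn_Ioo]
      exact ((intervalIntegral.integrableOn_Ioo_rpow_iff zero_lt_one).2 (by linarith)).const_mul a
    refine hdom.mono' ((hcont.mono Ioc_subset_Ioi_self).aestronglyMeasurable measurableSet_Ioc) ?_
    filter_upwards [ae_restrict_mem measurableSet_Ioc] with x hx
    have hx0 : 0 < x := hx.1
    calc ‖(exp (-a * x) - 1) * x ^ (-s - 1)‖
        = |exp (-a * x) - 1| * x ^ (-s - 1) := norm_exp_neg_mul_sub_one_mul_rpow _ hx0
      _ ≤ a * x * x ^ (-s - 1) := by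
          gcongr; exact abs_exp_neg_mul_sub_one_le ha hx0.le
      _ = a * x ^ (-s) := by
          rw [mul_assoc, mul_comm x, ← rpow_add_one hx0.ne']; ring_nf
  · have hdom : IntegrableOn (fun x : ℝ => x ^ (-s - 1)) (Ioi 1) :=
      integrableOn_Ioi_rpow_of_lt (by linarith) zero_lt_one
    refine hdom.mono' ((hcont.mono (Ioi_subset_Ioi zero_le_one)).aestronglyMeasurable
      measurableSet_Ioi) ?_
    filter_upwards [ae_restrict_mem measurableSet_Ioi] with x (hx : 1 < x)
    calc ‖(exp (-a * x) - 1) * x ^ (-s - 1)‖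
        = |exp (-a * x) - 1| * x ^ (-s - 1) := 
          norm_exp_neg_mul_sub_one_mul_rpow _ (by linarith)
      _ ≤ 1 * x ^ (-s - 1) := by
          gcongr; exact abs_exp_neg_mul_sub_one_le_one ha (by linarith)
      _ = x ^ (-s - 1) := one_mul _

lemma tendsto_exp_neg_mul_sub_one_mul_rpow_nhdsGT_zero (ha : 0 ≤ a) (hs1 : s < 1) :
    Tendsto (fun x : ℝ => (exp (-a * x) - 1) * x ^ (-s)) (𝓝[>] 0) (𝓝 0) := by
  have hlim : Tendsto (fun x : ℝ => a * x ^ (1 - s)) (𝓝[>] 0) (𝓝 0) := by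
    have := ((continuousAt_rpow_const 0 (1 - s) (Or.inr (by linarith))).tendsto.const_mul a)
    rw [zero_rpow (by linarith), mul_zero] at this
    exact this.mono_left nhdsWithin_le_nhds
  refine squeeze_zero_norm' ?_ hlim
  filter_upwards [self_mem_nhdsWithin] with x (hx : 0 < x)
  calc ‖(exp (-a * x) - 1) * x ^ (-s)‖ = |exp (-a * x) - 1| * x ^ (-s) :=
        norm_exp_neg_mul_sub_one_mul_rpow _ hx
    _ ≤ a * x * x ^ (-s) := by gcongr; exact abs_exp_neg_mul_sub_one_le ha hx.le
    _ = a * x ^ (1 - s) := by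
        rw [mul_assoc, mul_comm x, ← rpow_add_one hx.ne']; ring_nf

lemma tendsto_exp_neg_mul_sub_one_mul_rpow_atTop (ha : 0 ≤ a) (hs0 : 0 < s) :
    Tendsto (fun x : ℝ => (exp (-a * x) - 1) * x ^ (-s)) atTop (𝓝 0) := by
  refine squeeze_zero_norm' ?_ (tendsto_rpow_neg_atTop hs0)
  filter_upwards [eventually_gt_atTop 0] with x hx
  calc ‖(exp (-a * x) - 1) * x ^ (-s)‖ = |exp (-a * x) - 1| * x ^ (-s) :=
        norm_exp_neg_mul_sub_one_mul_rpow _ hx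
    _ ≤ 1 * x ^ (-s) := by gcongr; exact abs_exp_neg_mul_sub_one_le_one ha hx.le
    _ = x ^ (-s) := one_mul _

lemma integral_rpow_neg_mul_exp_neg_mul_Ioi (ha : 0 < a) (hs1 : s < 1) :
    ∫ x in Ioi (0 : ℝ), x ^ (-s) * exp (-a * x) = Gamma (1 - s) * a ^ (s - 1) := by
  have h := integral_rpow_mul_exp_neg_mul_Ioi (sub_pos.2 hs1) ha
  simp only [sub_sub_cancel_left, ← neg_mul] at h
  rw [h, one_div, inv_rpow ha.le, ← rpow_neg ha.le, neg_sub, mul_comm]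

theorem integral_exp_neg_mul_sub_one_mul_rpow (ha : 0 < a) (hs0 : 0 < s) (hs1 : s < 1) :
    ∫ x in Ioi (0 : ℝ), (exp (-a * x) - 1) * x ^ (-s - 1) = Gamma (-s) * a ^ s := by
  have hu : ∀ x ∈ Ioi (0 : ℝ), HasDerivAt (fun x => exp (-a * x) - 1) (-a * exp (-a * x)) x :=
    fun x _ => by
      simpa [mul_comm] using (((hasDerivAt_id x).const_mul (-a)).exp).sub_const 1
  have hv : ∀ x ∈ Ioi (0 : ℝ), HasDerivAt (fun x => x ^ (-s)) (-s * x ^ (-s - 1)) x :=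
    fun x hx => hasDerivAt_rpow_const (Or.inl (ne_of_gt hx))
  have huv' : IntegrableOn (fun x => (exp (-a * x) - 1) * (-s * x ^ (-s - 1))) (Ioi 0) :=
    IntegrableOn.congr_fun
      ((integrableOn_exp_neg_mul_sub_one_mul_rpow ha.le hs0 hs1).const_mul (-s))
      (fun x _ => by ring) measurableSet_Ioi
  have hu'v : IntegrableOn (fun x => -a * exp (-a * x) * x ^ (-s)) (Ioi 0) :=
    IntegrableOn.congr_fun
      ((integrableOn_rpow_mul_exp_neg_mul_rpow (s := -s) (by linarith) one_pos ha).const_mul (-a))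
      (fun x _ => by simp only [rpow_one]; ring) measurableSet_Ioi
  have hparts := integral_Ioi_mul_deriv_eq_deriv_mul hu hv huv' hu'v
    (tendsto_exp_neg_mul_sub_one_mul_rpow_nhdsGT_zero ha.le hs1)
    (tendsto_exp_neg_mul_sub_one_mul_rpow_atTop ha.le hs0)
  have hGamma : Gamma (1 - s) = -s * Gamma (-s) := by
    rw [← Gamma_add_one (neg_ne_zero.2 hs0.ne'), neg_add_eq_sub]
  simp only [mul_left_comm _ (-s), integral_const_mul, mul_assoc (-a), mul_comm (exp _)] at hparts
  rw [integral_rpow_neg_mul_exp_neg_mul_Ioi ha hs1, hGamma, rpow_sub_one ha.ne'] at hparts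
  have hs : -s ≠ 0 := neg_ne_zero.2 hs0.ne'
  apply mul_left_cancel₀ hs
  rw [hparts]
  field_simp
  ring

end ExpNegMulSubOne

lemma tempered_stable_integrand_eq (α θ c lam : ℝ) {x : ℝ} (hx : 0 < x) :
    (exp (-lam * x) - 1) * (-c * exp (-θ * x)) / (Gamma (-α / 2) * x ^ (α / 2 + 1)) =
      -c / Gamma (-(α / 2)) * ((exp (-(θ + lam) * x) - 1) * x ^ (-(α / 2) - 1) -
        (exp (-θ * x) - 1) * x ^ (-(α / 2) - 1)) := by
  have hexp : exp (-(θ + lam) * x) = exp (-lam * x) * exp (-θ * x) := by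
    rw [← exp_add]; ring_nf
  rw [hexp, show -(α / 2) - 1 = -(α / 2 + 1) by ring, rpow_neg hx.le, neg_div]
  ring

theorem tempered_stable_laplace_exponent_general
    (α θ c lam : ℝ) (hα : α ∈ Set.Ioo (0 : ℝ) 2) (hθ : 0 < θ) (hlam : 0 ≤ lam) :
    IntegrableOn
      (fun x : ℝ => (Real.exp (-lam * x) - 1) * (-c * Real.exp (-θ * x)) /
        (Real.Gamma (-α / 2) * x ^ (α / 2 + 1))) (Set.Ioi 0) ∧
    (∫ x in Set.Ioi (0 : ℝ), (Real.exp (-lam * x) - 1) * (-c * Real.exp (-θ * x)) /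
        (Real.Gamma (-α / 2) * x ^ (α / 2 + 1)))
      = -c * ((θ + lam) ^ (α / 2) - θ ^ (α / 2)) := by
  obtain ⟨hα0, hα2⟩ := hα
  have hs0 : 0 < α / 2 := by linarith
  have hs1 : α / 2 < 1 := by linarith
  have hθlam : 0 < θ + lam := by linarith
  have hint₁ := integrableOn_exp_neg_mul_sub_one_mul_rpow hθlam.le hs0 hs1
  have hint₂ := integrableOn_exp_neg_mul_sub_one_mul_rpow hθ.le hs0 hs1
  have hintegrand := fun x (hx : x ∈ Ioi (0 : ℝ)) => (tempered_stable_integrand_eq α θ c lam hx).symm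
  constructor
  · exact IntegrableOn.congr_fun ((hint₁.sub hint₂).const_mul _) hintegrand measurableSet_Ioi
  · rw [← setIntegral_congr_fun measurableSet_Ioi hintegrand, integral_const_mul,
      integral_sub hint₁ hint₂, integral_exp_neg_mul_sub_one_mul_rpow hθlam hs0 hs1,
      integral_exp_neg_mul_sub_one_mul_rpow hθ hs0 hs1]
    field_simp [(Gamma_neg_lt_zero hs0 hs1).ne]

/-- Laplace-exponent identity for the Lévy density of the tempered stable subordinator:
for `α ∈ (0,2)`, `θ > 0`, `c > 0` and `λ ≥ 0`, the integral
`∫_{(0,∞)} (e^{−λx} − 1) · (−c e^{−θx}) / (Γ(−α/2) · x^{α/2+1}) dx` converges and equals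
`−c·((θ+λ)^{α/2} − θ^{α/2})`. -/
theorem tempered_stable_laplace_exponent
    (α θ c lam : ℝ) (hα : α ∈ Set.Ioo (0 : ℝ) 2) (hθ : 0 < θ) (hc : 0 < c) (hlam : 0 ≤ lam) :
    IntegrableOn
      (fun x : ℝ => (Real.exp (-lam * x) - 1) * (-c * Real.exp (-θ * x)) /
        (Real.Gamma (-α / 2) * x ^ (α / 2 + 1))) (Set.Ioi 0) ∧
    (∫ x in Set.Ioi (0 : ℝ), (Real.exp (-lam * x) - 1) * (-c * Real.exp (-θ * x)) /
        (Real.Gamma (-α / 2) * x ^ (α / 2 + 1)))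
      = -c * ((θ + lam) ^ (α / 2) - θ ^ (α / 2)) :=
  tempered_stable_laplace_exponent_general α θ c lam hα hθ hlam
end

section
/- Let α ∈ (0,2), θ > 0, c > 0 and u ∈ ℝ. Then the improper integral ∫_{(0,∞)} (e^{iux} − 1) · (−c e^{−θx}) / (Γ(−α/2) · x^{α/2+1}) dx converges and equals −c·((θ − iu)^{α/2} − θ^{α/2}), where (θ − iu)^{α/2} denotes the principal branch of the complex power. -/
/-! For `0 < re w` the Gamma integral `∫₀^∞ x^(s-1) e^(-wx) dx = Γ(s) / w^s` follows from the case
of real `w` by analytic continuation in `w`. Integrating `(e^(-wx) - 1) x^(-ρ-1)` by parts, with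
primitive `(e^(-wx) - 1) x^(-ρ)` vanishing at both ends, reduces it to the Gamma integral with
`s = 1 - ρ`, and `Γ(1 - ρ) = -ρ Γ(-ρ)` turns the result into `Γ(-ρ) w^ρ`. Since
`(e^(iux) - 1) e^(-θx) = (e^(-(θ-iu)x) - 1) - (e^(-θx) - 1)`, the tempered stable integral is
`-c / Γ(-α/2)` times the difference of these integrals at `w = θ - iu` and `w = θ`,
with `ρ = α/2`. -/

open MeasureTheory Set Filter Topology

namespace Complex

theorem norm_exp_sub_one_le_norm_of_re_nonpos {z : ℂ} (hz : z.re ≤ 0) : ‖exp z - 1‖ ≤ ‖z‖ := by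
  simpa using (convex_halfSpace_re_le (r := 0)).norm_image_sub_le_of_norm_deriv_le
    (f := exp) (C := 1) (x := 0) (y := z) (fun _ _ => differentiableAt_exp)
    (fun v hv => by simpa [norm_exp] using hv) (by simp) hz

section ExpNegMul

variable {w : ℂ} {x : ℝ}

theorem norm_exp_neg_mul_ofReal_sub_one_le (hw : 0 ≤ w.re) (hx : 0 ≤ x) :
    ‖exp (-(w * x)) - 1‖ ≤ ‖w‖ * x := by
  have h := norm_exp_sub_one_le_norm_of_re_nonpos (z := -(w * x))
    (by simpa using mul_nonneg hw hx)
  rwa [norm_neg, norm_mul, norm_real, Real.norm_of_nonneg hx] at h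

theorem norm_exp_neg_mul_ofReal_sub_one_le_two (hw : 0 ≤ w.re) (hx : 0 ≤ x) :
    ‖exp (-(w * x)) - 1‖ ≤ 2 :=
  calc ‖exp (-(w * x)) - 1‖ ≤ ‖exp (-(w * x))‖ + ‖(1 : ℂ)‖ := norm_sub_le _ _
    _ ≤ 1 + 1 := by
      gcongr
      · simpa [norm_exp] using mul_nonneg hw hx
      · simp
    _ = 2 := by norm_num

end ExpNegMul

theorem integrableOn_cpow_mul_exp_neg_mul_Ioi {s w : ℂ} (hs : 0 < s.re) (hw : 0 < w.re) :
    IntegrableOn (fun x : ℝ => (x : ℂ) ^ (s - 1) * exp (-(w * x))) (Ioi 0) := by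
  refine (integrableOn_rpow_mul_exp_neg_mul_rpow (p := 1) (s := s.re - 1) (by linarith) one_pos
    hw).congr' (by fun_prop) ?_
  filter_upwards [ae_restrict_mem measurableSet_Ioi] with x hx
  rw [norm_mul, norm_mul, norm_cpow_eq_rpow_re_of_pos hx, norm_exp, Real.rpow_one,
    Real.norm_of_nonneg (Real.rpow_nonneg (le_of_lt hx) _),
    Real.norm_of_nonneg (Real.exp_nonneg _)]
  simp

theorem hasDerivAt_integral_cpow_mul_exp_neg_mul_Ioi {s w : ℂ} (hs : 0 < s.re) (hw : 0 < w.re) :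
    HasDerivAt (fun v : ℂ => ∫ x : ℝ in Ioi 0, (x : ℂ) ^ (s - 1) * exp (-(v * x)))
      (-∫ x : ℝ in Ioi 0, (x : ℂ) ^ s * exp (-(w * x))) w := by
  have hball : ∀ v ∈ Metric.ball w (w.re / 2), w.re / 2 < v.re := fun v hv => by
    have := (abs_re_le_norm (v - w)).trans_lt (mem_ball_iff_norm.1 hv)
    rw [sub_re, abs_lt] at this
    linarith
  -- On the ball the derivatives are dominated by the integrand for `s + 1` at `re w / 2`.
  have h := hasDerivAt_integral_of_dominated_loc_of_deriv_le
    (F := fun v (x : ℝ) => (x : ℂ) ^ (s - 1) * exp (-(v * x)))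
    (F' := fun v (x : ℝ) => -((x : ℂ) ^ (s + 1 - 1) * exp (-(v * x))))
    (Metric.ball_mem_nhds w (half_pos hw)) (Eventually.of_forall fun _ => by fun_prop)
    (integrableOn_cpow_mul_exp_neg_mul_Ioi hs hw) (by fun_prop) ?_
    (integrableOn_cpow_mul_exp_neg_mul_Ioi (s := s + 1) (by simp; linarith)
      (w := (w.re / 2 : ℝ)) (by simpa using hw)).norm ?_
  · simpa only [add_sub_cancel_right, integral_neg] using h.2
  · filter_upwards [ae_restrict_mem measurableSet_Ioi] with x (hx : 0 < x) v hv
    simp only [norm_neg, norm_mul, norm_exp]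
    refine mul_le_mul_of_nonneg_left (Real.exp_le_exp.2 ?_) (norm_nonneg _)
    simp only [neg_re, mul_re, ofReal_re, ofReal_im, mul_zero, sub_zero]
    nlinarith [hball v hv]
  · filter_upwards [ae_restrict_mem measurableSet_Ioi] with x (hx : 0 < x) v _
    have hpow : (x : ℂ) ^ (s + 1 - 1) = (x : ℂ) ^ (s - 1) * x := by
      rw [show s + 1 - 1 = (s - 1) + 1 by ring, cpow_add _ _ (ofReal_ne_zero.2 hx.ne'), cpow_one]
    have := ((hasDerivAt_id v).mul_const (x : ℂ)).neg.cexp.const_mul ((x : ℂ) ^ (s - 1))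
    simp only [id, Pi.neg_apply] at this
    exact this.congr_deriv (by rw [hpow]; ring)

theorem integral_cpow_mul_exp_neg_mul_Ioi_of_re_pos {s w : ℂ} (hs : 0 < s.re) (hw : 0 < w.re) :
    ∫ x : ℝ in Ioi 0, (x : ℂ) ^ (s - 1) * exp (-(w * x)) = Gamma s / w ^ s := by
  let U : Set ℂ := {v | 0 < v.re}
  have hU : IsOpen U := isOpen_lt continuous_const continuous_re
  have hlhs : AnalyticOnNhd ℂ
      (fun v : ℂ => ∫ x : ℝ in Ioi 0, (x : ℂ) ^ (s - 1) * exp (-(v * x))) U :=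
    DifferentiableOn.analyticOnNhd (fun v hv =>
      (hasDerivAt_integral_cpow_mul_exp_neg_mul_Ioi hs hv).differentiableAt.differentiableWithinAt)
      hU
  have hrhs : AnalyticOnNhd ℂ (fun v : ℂ => Gamma s / v ^ s) U :=
    DifferentiableOn.analyticOnNhd (fun v (hv : 0 < v.re) => ((differentiableAt_const _).div
      (differentiableAt_id.cpow_const (Or.inl hv))
      ((cpow_ne_zero_iff_of_exponent_ne_zero (by rintro rfl; simp at hs)).2
        (slitPlane_ne_zero (Or.inl hv)))).differentiableWithinAt) hU
  have hreal : ∀ r : ℝ, 0 < r →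
      ∫ x : ℝ in Ioi 0, (x : ℂ) ^ (s - 1) * exp (-(r * x)) = Gamma s / (r : ℂ) ^ s := by
    intro r hr
    rw [integral_cpow_mul_exp_neg_mul_Ioi hs hr, one_div,
      inv_cpow _ _ (by simp [arg_ofReal_of_nonneg hr.le, Real.pi_ne_zero.symm]), div_eq_inv_mul]
  have hfreq : ∃ᶠ v in 𝓝[≠] (1 : ℂ),
      ∫ x : ℝ in Ioi 0, (x : ℂ) ^ (s - 1) * exp (-(v * x)) = Gamma s / v ^ s := by
    have hto : Tendsto ((↑) : ℝ → ℂ) (𝓝[≠] 1) (𝓝[≠] 1) := by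
      refine tendsto_nhdsWithin_iff.2 ⟨?_, eventually_nhdsWithin_of_forall fun r hr => ?_⟩
      · simpa using continuous_ofReal.continuousWithinAt.tendsto (x := 1) (s := {1}ᶜ)
      · simpa using hr
    refine hto.frequently (Eventually.frequently ?_)
    filter_upwards [eventually_nhdsWithin_of_eventually_nhds (eventually_gt_nhds one_pos)]
      with r hr
    exact hreal r hr
  exact hlhs.eqOn_of_preconnected_of_frequently_eq hrhs (convex_halfSpace_re_gt 0).isPreconnected
    (by simp [U]) hfreq hw

section StableIntegral

variable {ρ w : ℂ}

theorem integrableOn_exp_neg_mul_sub_one_mul_cpow_Ioi (hρ0 : 0 < ρ.re) (hρ1 : ρ.re < 1)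
    (hw : 0 ≤ w.re) :
    IntegrableOn (fun x : ℝ => (exp (-(w * x)) - 1) * (x : ℂ) ^ (-ρ - 1)) (Ioi 0) := by
  have hnorm : ∀ x : ℝ, 0 < x → ‖(exp (-(w * x)) - 1) * (x : ℂ) ^ (-ρ - 1)‖ =
      ‖exp (-(w * x)) - 1‖ * x ^ (-ρ.re - 1) := fun x hx => by
    rw [norm_mul, norm_cpow_eq_rpow_re_of_pos hx]
    simp
  rw [← Ioc_union_Ioi_eq_Ioi zero_le_one, integrableOn_union]
  constructor
  · refine ((intervalIntegral.intervalIntegrable_rpow' (a := 0) (b := 1)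
      (by linarith : -1 < -ρ.re)).1.const_mul ‖w‖).mono' (by fun_prop) ?_
    filter_upwards [ae_restrict_mem measurableSet_Ioc] with x hx
    obtain ⟨hx, -⟩ := hx
    calc _ = ‖exp (-(w * x)) - 1‖ * x ^ (-ρ.re - 1) := hnorm x hx
      _ ≤ ‖w‖ * x * x ^ (-ρ.re - 1) := by
        gcongr; exact norm_exp_neg_mul_ofReal_sub_one_le hw hx.le
      _ = ‖w‖ * x ^ (-ρ.re) := by
        rw [Real.rpow_sub_one hx.ne']; field_simp
  · refine ((integrableOn_Ioi_rpow_of_lt (by linarith : -ρ.re - 1 < -1) one_pos).const_mul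
      2).mono' (by fun_prop) ?_
    filter_upwards [ae_restrict_mem measurableSet_Ioi] with x (hx : 1 < x)
    rw [hnorm x (by linarith)]
    gcongr
    exact norm_exp_neg_mul_ofReal_sub_one_le_two hw (by linarith)

theorem hasDerivAt_exp_neg_mul_sub_one_mul_cpow (hρ : ρ ≠ 0) {x : ℝ} (hx : 0 < x) :
    HasDerivAt (fun x : ℝ => (exp (-(w * x)) - 1) * (x : ℂ) ^ (-ρ))
      (-w * ((x : ℂ) ^ (-ρ) * exp (-(w * x))) +
        -ρ * ((exp (-(w * x)) - 1) * (x : ℂ) ^ (-ρ - 1))) x := by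
  have h1 := (((hasDerivAt_id (x : ℂ)).const_mul w).neg.cexp).comp_ofReal
  have h2 := hasDerivAt_ofReal_cpow_const hx.ne' (neg_ne_zero.2 hρ)
  exact ((h1.sub_const 1).mul h2).congr_deriv (by simp only [id, Pi.neg_apply]; ring)

theorem continuousWithinAt_exp_neg_mul_sub_one_mul_cpow_zero (hρ1 : ρ.re < 1) (hw : 0 ≤ w.re) :
    ContinuousWithinAt (fun x : ℝ => (exp (-(w * x)) - 1) * (x : ℂ) ^ (-ρ)) (Ici 0) 0 := by
  rw [← continuousWithinAt_Ioi_iff_Ici, ContinuousWithinAt]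
  have hlim : Tendsto (fun x : ℝ => ‖w‖ * x ^ (1 - ρ.re)) (𝓝[>] 0) (𝓝 0) := by
    have := ((Real.continuousAt_rpow_const 0 (1 - ρ.re) (Or.inr (by linarith))).tendsto.const_mul
      ‖w‖).mono_left (nhdsWithin_le_nhds (s := Ioi 0))
    simpa [Real.zero_rpow (by linarith : 1 - ρ.re ≠ 0)] using this
  simp only [ofReal_zero, mul_zero, neg_zero, exp_zero, sub_self, zero_mul]
  refine squeeze_zero_norm' ?_ hlim
  filter_upwards [self_mem_nhdsWithin] with x (hx : 0 < x)
  calc ‖(exp (-(w * x)) - 1) * (x : ℂ) ^ (-ρ)‖ = ‖exp (-(w * x)) - 1‖ * x ^ (-ρ.re) := by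
        simp [norm_cpow_eq_rpow_re_of_pos hx]
    _ ≤ ‖w‖ * x * x ^ (-ρ.re) := by gcongr; exact norm_exp_neg_mul_ofReal_sub_one_le hw hx.le
    _ = ‖w‖ * x ^ (1 - ρ.re) := by rw [sub_eq_add_neg, Real.rpow_add hx, Real.rpow_one]; ring

theorem tendsto_exp_neg_mul_sub_one_mul_cpow_atTop (hρ0 : 0 < ρ.re) (hw : 0 ≤ w.re) :
    Tendsto (fun x : ℝ => (exp (-(w * x)) - 1) * (x : ℂ) ^ (-ρ)) atTop (𝓝 0) := by
  refine squeeze_zero_norm' ?_ (by simpa using (tendsto_rpow_neg_atTop hρ0).const_mul 2)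
  filter_upwards [eventually_gt_atTop 0] with x hx
  rw [norm_mul, norm_cpow_eq_rpow_re_of_pos hx, neg_re]
  gcongr
  exact norm_exp_neg_mul_ofReal_sub_one_le_two hw hx.le

theorem mul_integral_exp_neg_mul_sub_one_mul_cpow_Ioi (hρ0 : 0 < ρ.re) (hρ1 : ρ.re < 1)
    (hw : 0 < w.re) :
    ρ * ∫ x : ℝ in Ioi 0, (exp (-(w * x)) - 1) * (x : ℂ) ^ (-ρ - 1) =
      -w * ∫ x : ℝ in Ioi 0, (x : ℂ) ^ (-ρ) * exp (-(w * x)) := by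
  have hρ : ρ ≠ 0 := by rintro rfl; simp at hρ0
  have hFint := integrableOn_cpow_mul_exp_neg_mul_Ioi (s := 1 - ρ) (by simpa using hρ1) hw
  simp only [sub_sub_cancel_left] at hFint
  have hIint := integrableOn_exp_neg_mul_sub_one_mul_cpow_Ioi hρ0 hρ1 hw.le
  have key := integral_Ioi_of_hasDerivAt_of_tendsto
    (continuousWithinAt_exp_neg_mul_sub_one_mul_cpow_zero hρ1 hw.le)
    (fun x hx => hasDerivAt_exp_neg_mul_sub_one_mul_cpow hρ hx)
    ((hFint.const_mul (-w)).add (hIint.const_mul (-ρ)))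
    (tendsto_exp_neg_mul_sub_one_mul_cpow_atTop hρ0 hw.le)
  rw [integral_add (hFint.const_mul (-w)) (hIint.const_mul (-ρ)), integral_const_mul,
    integral_const_mul] at key
  simp only [ofReal_zero, mul_zero, neg_zero, exp_zero, sub_self, zero_mul] at key
  linear_combination -key

theorem integral_exp_neg_mul_sub_one_mul_cpow_Ioi (hρ0 : 0 < ρ.re) (hρ1 : ρ.re < 1)
    (hw : 0 < w.re) :
    ∫ x : ℝ in Ioi 0, (exp (-(w * x)) - 1) * (x : ℂ) ^ (-ρ - 1) = Gamma (-ρ) * w ^ ρ := by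
  have hρ : ρ ≠ 0 := by rintro rfl; simp at hρ0
  have hw0 : w ≠ 0 := by rintro rfl; simp at hw
  have hF := integral_cpow_mul_exp_neg_mul_Ioi_of_re_pos (s := 1 - ρ) (by simpa using hρ1) hw
  rw [sub_sub_cancel_left, ← neg_add_eq_sub, Gamma_add_one _ (neg_ne_zero.2 hρ),
    neg_add_eq_sub, cpow_sub _ _ hw0, cpow_one] at hF
  have key := mul_integral_exp_neg_mul_sub_one_mul_cpow_Ioi hρ0 hρ1 hw
  have hwρ : w ^ ρ ≠ 0 := (cpow_ne_zero_iff_of_exponent_ne_zero hρ).2 hw0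
  rw [hF] at key
  apply mul_left_cancel₀ hρ
  field_simp at key ⊢
  linear_combination key

theorem exp_I_mul_sub_one_mul_exp_neg_mul (θ u x y : ℂ) :
    (exp (I * u * x) - 1) * (exp (-(θ * x)) * y) =
      (exp (-((θ - I * u) * x)) - 1) * y - (exp (-(θ * x)) - 1) * y := by
  rw [show -((θ - I * u) * x) = I * u * x + -(θ * x) by ring, exp_add]
  ring

theorem integrableOn_exp_I_mul_sub_one_mul_exp_neg_mul_cpow_Ioi {θ : ℂ} (hρ0 : 0 < ρ.re)
    (hρ1 : ρ.re < 1) (hθ : 0 < θ.re) (u : ℝ) :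
    IntegrableOn (fun x : ℝ => (exp (I * u * x) - 1) * (exp (-(θ * x)) * (x : ℂ) ^ (-ρ - 1)))
      (Ioi 0) := by
  simp only [exp_I_mul_sub_one_mul_exp_neg_mul]
  exact (integrableOn_exp_neg_mul_sub_one_mul_cpow_Ioi hρ0 hρ1 (by simpa using hθ.le)).sub
    (integrableOn_exp_neg_mul_sub_one_mul_cpow_Ioi hρ0 hρ1 hθ.le)

theorem integral_exp_I_mul_sub_one_mul_exp_neg_mul_cpow_Ioi {θ : ℂ} (hρ0 : 0 < ρ.re)
    (hρ1 : ρ.re < 1) (hθ : 0 < θ.re) (u : ℝ) :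
    ∫ x : ℝ in Ioi 0, (exp (I * u * x) - 1) * (exp (-(θ * x)) * (x : ℂ) ^ (-ρ - 1)) =
      Gamma (-ρ) * ((θ - I * u) ^ ρ - θ ^ ρ) := by
  have hw : 0 < (θ - I * u).re := by simpa using hθ
  simp only [exp_I_mul_sub_one_mul_exp_neg_mul]
  rw [integral_sub (integrableOn_exp_neg_mul_sub_one_mul_cpow_Ioi hρ0 hρ1 hw.le)
    (integrableOn_exp_neg_mul_sub_one_mul_cpow_Ioi hρ0 hρ1 hθ.le),
    integral_exp_neg_mul_sub_one_mul_cpow_Ioi hρ0 hρ1 hw,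
    integral_exp_neg_mul_sub_one_mul_cpow_Ioi hρ0 hρ1 hθ, mul_sub]

end StableIntegral

end Complex

open Complex in
theorem tempered_stable_characteristic_exponent_general
    (α θ c u : ℝ) (hα : α ∈ Set.Ioo (0 : ℝ) 2) (hθ : 0 < θ) :
    IntegrableOn
      (fun x : ℝ => (Complex.exp (Complex.I * u * x) - 1) *
        (((-c * Real.exp (-θ * x)) / (Real.Gamma (-α / 2) * x ^ (α / 2 + 1)) : ℝ) : ℂ))
      (Set.Ioi 0) ∧
    (∫ x in Set.Ioi (0 : ℝ), (Complex.exp (Complex.I * u * x) - 1) *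
        (((-c * Real.exp (-θ * x)) / (Real.Gamma (-α / 2) * x ^ (α / 2 + 1)) : ℝ) : ℂ))
      = -(c : ℂ) * (((θ : ℂ) - Complex.I * u) ^ ((α : ℂ) / 2) - (θ : ℂ) ^ ((α : ℂ) / 2)) := by
  set ρ : ℂ := ((α / 2 : ℝ) : ℂ) with hρ
  have hρ0 : 0 < ρ.re := by simp [ρ]; linarith [hα.1]
  have hρ1 : ρ.re < 1 := by simp [ρ]; linarith [hα.2]
  have hθ' : 0 < (θ : ℂ).re := by simpa using hθ
  have hΓ : (Real.Gamma (-α / 2) : ℂ) = Gamma (-ρ) := by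
    rw [hρ, ← ofReal_neg, Gamma_ofReal, neg_div]
  have hΓ0 : Gamma (-ρ) ≠ 0 := by
    rw [← hΓ, ofReal_ne_zero, neg_div]
    exact Real.Gamma_ne_zero fun m hm => by
      rcases m with _ | m <;> push_cast at hm <;> linarith [hα.1, hα.2]
  have hdensity : ∀ x ∈ Ioi (0 : ℝ), (exp (I * u * x) - 1) *
      (((-c * Real.exp (-θ * x)) / (Real.Gamma (-α / 2) * x ^ (α / 2 + 1)) : ℝ) : ℂ) =
      -c / Gamma (-ρ) * ((exp (I * u * x) - 1) * (exp (-(θ * x)) * (x : ℂ) ^ (-ρ - 1))) :=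
    fun x (hx : 0 < x) => by
      have hpow : ((x ^ (α / 2 + 1) : ℝ) : ℂ) = ((x : ℂ) ^ (-ρ - 1))⁻¹ := by
        rw [ofReal_cpow hx.le, ← cpow_neg, hρ]; push_cast; ring_nf
      push_cast
      rw [hpow, hΓ]
      field_simp
  have hint := integrableOn_exp_I_mul_sub_one_mul_exp_neg_mul_cpow_Ioi hρ0 hρ1 hθ' u
  refine ⟨IntegrableOn.congr_fun (hint.const_mul _) (fun x hx => (hdensity x hx).symm)
    measurableSet_Ioi, ?_⟩
  rw [setIntegral_congr_fun measurableSet_Ioi hdensity, integral_const_mul,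
    integral_exp_I_mul_sub_one_mul_exp_neg_mul_cpow_Ioi hρ0 hρ1 hθ' u,
    show (α : ℂ) / 2 = ρ by simp [ρ]]
  field_simp

/-- Characteristic-exponent identity for the Lévy density of the tempered stable subordinator:
for `α ∈ (0,2)`, `θ > 0`, `c > 0` and `u ∈ ℝ`, the integral
`∫_{(0,∞)} (e^{iux} − 1) · (−c e^{−θx}) / (Γ(−α/2) · x^{α/2+1}) dx` converges and equals
`−c·((θ − iu)^{α/2} − θ^{α/2})` (principal complex power). -/
theorem tempered_stable_characteristic_exponent
    (α θ c u : ℝ) (hα : α ∈ Set.Ioo (0 : ℝ) 2) (hθ : 0 < θ) (hc : 0 < c) :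
    IntegrableOn
      (fun x : ℝ => (Complex.exp (Complex.I * u * x) - 1) *
        (((-c * Real.exp (-θ * x)) / (Real.Gamma (-α / 2) * x ^ (α / 2 + 1)) : ℝ) : ℂ))
      (Set.Ioi 0) ∧
    (∫ x in Set.Ioi (0 : ℝ), (Complex.exp (Complex.I * u * x) - 1) *
        (((-c * Real.exp (-θ * x)) / (Real.Gamma (-α / 2) * x ^ (α / 2 + 1)) : ℝ) : ℂ))
      = -(c : ℂ) * (((θ : ℂ) - Complex.I * u) ^ ((α : ℂ) / 2) - (θ : ℂ) ^ ((α : ℂ) / 2)) :=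
  tempered_stable_characteristic_exponent_general α θ c u hα hθ
end

section
/- Let N be a positive integer, T a nonnegative real random variable with E[T²] < ∞, and G = (G_1, …, G_N) a random vector independent of T, with each G_n square-integrable and E[G_n] = 0. Let μ, β, σ ∈ ℝ^N and define Y_n = μ_n + β_n T + σ_n √T·G_n for n = 1,…,N. Then for all k, n, Cov(Y_k, Y_n) = σ_k σ_n Cov(G_k, G_n)·E[T] + β_k β_n·Var(T). -/
open MeasureTheory ProbabilityTheory

/-- The covariance of two real random variables `X`, `Y` on a measure space. -/
noncomputable def cov {Ω : Type*} [MeasurableSpace Ω] (X Y : Ω → ℝ)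
    (P : Measure Ω) : ℝ :=
  ∫ ω, (X ω - ∫ ω', X ω' ∂P) * (Y ω - ∫ ω', Y ω' ∂P) ∂P

/-!
Write `Y_n = μ_n + β_n T + σ_n R_n` with `R_n = √T G_n`. By bilinearity, `Cov(Y_k, Y_n)` splits
into `β_k β_n Var T`, two cross terms `Cov(T, R_j)` and `σ_k σ_n Cov(R_k, R_n)`. Independence of
`T` and the centered `G` makes every `R_j` centered and kills the cross terms, since
`E[(T - E T) √T G_j] = E[(T - E T) √T] E[G_j] = 0`; and, since `√T √T = T`,
`Cov(R_k, R_n) = E[T G_k G_n] = E[T] E[G_k G_n] = E[T] Cov(G_k, G_n)`.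
-/

lemma cov_eq_covariance {Ω : Type*} [MeasurableSpace Ω] (X Y : Ω → ℝ) (P : Measure Ω) :
    cov X Y P = cov[X, Y; P] :=
  rfl

namespace ProbabilityTheory

variable {Ω : Type*} [MeasurableSpace Ω] {P : Measure Ω} {T X Y : Ω → ℝ}

lemma covariance_affine [IsProbabilityMeasure P] {U V U' V' : Ω → ℝ}
    (hU : MemLp U 2 P) (hV : MemLp V 2 P) (hU' : MemLp U' 2 P) (hV' : MemLp V' 2 P)
    (a b c a' b' c' : ℝ) :
    cov[fun ω => a + b * U ω + c * V ω, fun ω => a' + b' * U' ω + c' * V' ω; P]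
      = b * b' * cov[U, U'; P] + b * c' * cov[U, V'; P]
        + c * b' * cov[V, U'; P] + c * c' * cov[V, V'; P] := by
  have affine : ∀ (a b c : ℝ) (U V : Ω → ℝ),
      (fun ω => a + b * U ω + c * V ω) = fun ω => a + (b • U + c • V) ω := by
    intro a b c U V
    funext ω
    simp only [Pi.add_apply, Pi.smul_apply, smul_eq_mul, add_assoc]
  rw [affine, affine,
    covariance_const_add_left ((hU.const_smul b).add (hV.const_smul c) |>.integrable one_le_two),
    covariance_const_add_right
      ((hU'.const_smul b').add (hV'.const_smul c') |>.integrable one_le_two),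
    covariance_add_left (hU.const_smul b) (hV.const_smul c)
      ((hU'.const_smul b').add (hV'.const_smul c')),
    covariance_add_right (hU.const_smul b) (hU'.const_smul b') (hV'.const_smul c'),
    covariance_add_right (hV.const_smul c) (hU'.const_smul b') (hV'.const_smul c')]
  simp only [covariance_smul_left, covariance_smul_right]
  ring

lemma covariance_of_integral_eq_zero (hX : P[X] = 0) (hY : P[Y] = 0) :
    cov[X, Y; P] = ∫ ω, X ω * Y ω ∂P := by
  simp only [covariance, hX, hY, sub_zero]

lemma integral_comp_mul_eq_zero_of_indepFun (hTX : T ⟂ᵢ[P] X) (hT : AEMeasurable T P)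
    (hX : AEStronglyMeasurable X P) (hX0 : P[X] = 0) {f : ℝ → ℝ} (hf : Measurable f) :
    ∫ ω, f (T ω) * X ω ∂P = 0 := by
  have hfTX : (fun ω => f (T ω)) ⟂ᵢ[P] X := hTX.comp hf measurable_id
  rw [hfTX.integral_fun_mul_eq_mul_integral (hf.comp_aemeasurable hT).aestronglyMeasurable hX,
    hX0, mul_zero]

lemma integral_sqrt_mul_eq_zero_of_indepFun (hTX : T ⟂ᵢ[P] X) (hT : AEMeasurable T P)
    (hX : AEStronglyMeasurable X P) (hX0 : P[X] = 0) :
    ∫ ω, √(T ω) * X ω ∂P = 0 :=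
  integral_comp_mul_eq_zero_of_indepFun hTX hT hX hX0 Real.continuous_sqrt.measurable

lemma memLp_two_sqrt_mul_of_indepFun (hTX : T ⟂ᵢ[P] X) (hTnn : ∀ ω, 0 ≤ T ω)
    (hT : Integrable T P) (hX : MemLp X 2 P) :
    MemLp (fun ω => √(T ω) * X ω) 2 P := by
  have hmeas : AEStronglyMeasurable (fun ω => √(T ω) * X ω) P :=
    (Real.continuous_sqrt.comp_aestronglyMeasurable hT.aestronglyMeasurable).mul
      hX.aestronglyMeasurable
  have hsq : (fun ω => (√(T ω) * X ω) ^ 2) = T * fun ω => X ω ^ 2 := by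
    funext ω
    simp only [Pi.mul_apply, mul_pow, Real.sq_sqrt (hTnn ω)]
  rw [memLp_two_iff_integrable_sq hmeas, hsq]
  exact (hTX.comp measurable_id (measurable_id.pow_const 2)).integrable_mul hT hX.integrable_sq

lemma covariance_self_sqrt_mul_eq_zero_of_indepFun (hTX : T ⟂ᵢ[P] X) (hT : AEMeasurable T P)
    (hX : AEStronglyMeasurable X P) (hX0 : P[X] = 0) :
    cov[T, fun ω => √(T ω) * X ω; P] = 0 := by
  simp only [covariance, integral_sqrt_mul_eq_zero_of_indepFun hTX hT hX hX0, sub_zero,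
    ← mul_assoc]
  exact integral_comp_mul_eq_zero_of_indepFun hTX hT hX hX0
    (f := fun x => (x - P[T]) * √x) (by fun_prop)

lemma covariance_sqrt_mul_sqrt_mul_of_indepFun (hTXY : T ⟂ᵢ[P] fun ω => (X ω, Y ω))
    (hTnn : ∀ ω, 0 ≤ T ω) (hT : AEMeasurable T P)
    (hX : AEStronglyMeasurable X P) (hY : AEStronglyMeasurable Y P)
    (hX0 : P[X] = 0) (hY0 : P[Y] = 0) :
    cov[fun ω => √(T ω) * X ω, fun ω => √(T ω) * Y ω; P] = P[T] * cov[X, Y; P] := by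
  have hTX : T ⟂ᵢ[P] X := hTXY.comp measurable_id measurable_fst
  have hTY : T ⟂ᵢ[P] Y := hTXY.comp measurable_id measurable_snd
  have hT_XY : T ⟂ᵢ[P] fun ω => X ω * Y ω := hTXY.comp measurable_id measurable_mul
  have hsqrt : ∀ ω, √(T ω) * X ω * (√(T ω) * Y ω) = T ω * (X ω * Y ω) := fun ω => by
    linear_combination X ω * Y ω * Real.mul_self_sqrt (hTnn ω)
  rw [covariance_of_integral_eq_zero (integral_sqrt_mul_eq_zero_of_indepFun hTX hT hX hX0)
      (integral_sqrt_mul_eq_zero_of_indepFun hTY hT hY hY0),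
    covariance_of_integral_eq_zero hX0 hY0]
  simp only [hsqrt]
  exact hT_XY.integral_fun_mul_eq_mul_integral hT.aestronglyMeasurable (hX.mul hY)

end ProbabilityTheory

theorem timeChanged_BM_covariance_general
    {Ω : Type*} [MeasurableSpace Ω] (P : Measure Ω) [IsProbabilityMeasure P]
    (N : ℕ)
    (T : Ω → ℝ) (G : Ω → (Fin N → ℝ))
    (hTnn : ∀ ω, 0 ≤ T ω) (hT2 : MemLp T 2 P)
    (hG2 : ∀ n, MemLp (fun ω => G ω n) 2 P)
    (hGmean : ∀ n, (∫ ω, G ω n ∂P) = 0)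
    (hindep : IndepFun G T P)
    (μ β σ : Fin N → ℝ) :
    ∀ k n : Fin N,
      cov (fun ω => μ k + β k * T ω + σ k * Real.sqrt (T ω) * G ω k)
          (fun ω => μ n + β n * T ω + σ n * Real.sqrt (T ω) * G ω n) P
        = σ k * σ n * cov (fun ω => G ω k) (fun ω => G ω n) P * (∫ ω, T ω ∂P)
          + β k * β n * variance T P := by
  intro k n
  have hT : AEMeasurable T P := hT2.aestronglyMeasurable.aemeasurable
  have hTG : ∀ j, T ⟂ᵢ[P] fun ω => G ω j := fun j =>
    hindep.symm.comp measurable_id (measurable_pi_apply j)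
  have hTGG : ∀ j j', T ⟂ᵢ[P] fun ω => (G ω j, G ω j') := fun j j' =>
    hindep.symm.comp measurable_id ((measurable_pi_apply j).prodMk (measurable_pi_apply j'))
  have hR2 : ∀ j, MemLp (fun ω => √(T ω) * G ω j) 2 P := fun j =>
    memLp_two_sqrt_mul_of_indepFun (hTG j) hTnn (hT2.integrable one_le_two) (hG2 j)
  have hcross : ∀ j, cov[T, fun ω => √(T ω) * G ω j; P] = 0 := fun j =>
    covariance_self_sqrt_mul_eq_zero_of_indepFun (hTG j) hT (hG2 j).aestronglyMeasurable
      (hGmean j)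
  simp only [cov_eq_covariance, mul_assoc (σ _)]
  rw [covariance_affine hT2 (hR2 k) hT2 (hR2 n), covariance_self hT, hcross,
    covariance_comm _ T, hcross,
    covariance_sqrt_mul_sqrt_mul_of_indepFun (hTGG k n) hTnn hT
      (hG2 k).aestronglyMeasurable (hG2 n).aestronglyMeasurable (hGmean k) (hGmean n)]
  ring

/-- Covariance structure of the multivariate time-changed model `Y_n = μ_n + β_n T + σ_n √T·G_n`
with `T ≥ 0` square-integrable, `G = (G_1,…,G_N)` a centered square-integrable random vector
independent of `T`: `Cov(Y_k, Y_n) = σ_k σ_n Cov(G_k, G_n)·E[T] + β_k β_n·Var(T)`. -/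
theorem timeChanged_BM_covariance
    {Ω : Type*} [MeasurableSpace Ω] (P : Measure Ω) [IsProbabilityMeasure P]
    (N : ℕ) (hN : 0 < N)
    (T : Ω → ℝ) (G : Ω → (Fin N → ℝ)) (hTm : Measurable T) (hGm : Measurable G)
    (hTnn : ∀ ω, 0 ≤ T ω) (hT2 : MemLp T 2 P)
    (hG2 : ∀ n, MemLp (fun ω => G ω n) 2 P)
    (hGmean : ∀ n, (∫ ω, G ω n ∂P) = 0)
    (hindep : IndepFun G T P)
    (μ β σ : Fin N → ℝ) :
    ∀ k n : Fin N,
      cov (fun ω => μ k + β k * T ω + σ k * Real.sqrt (T ω) * G ω k)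
          (fun ω => μ n + β n * T ω + σ n * Real.sqrt (T ω) * G ω n) P
        = σ k * σ n * cov (fun ω => G ω k) (fun ω => G ω n) P * (∫ ω, T ω ∂P)
          + β k * β n * variance T P :=
  timeChanged_BM_covariance_general P N T G hTnn hT2 hG2 hGmean hindep μ β σ
end

section
/- Let T be a nonnegative real random variable and Z a standard normal random variable independent of T. Let μ, β, σ ∈ ℝ. Then for every u ∈ ℝ, E[e^{iu(μ + βT + σ√T·Z)}] = e^{iuμ}·E[e^{(iuβ − σ²u²/2)T}], where both expectations are complex-valued integrals (the integrands are bounded since Re(iuβ − σ²u²/2) ≤ 0). -/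
/-!
Conditionally on `T = t`, the exponent `σ √t Z` is centred Gaussian with variance `σ² t`, so its
characteristic function at `u` is `exp (-σ² u² t / 2)`. Independence of `Z` and `T` makes the law
of `(T, Z)` a product measure, and Fubini integrates out `Z` first.
-/

open MeasureTheory ProbabilityTheory Complex

theorem ProbabilityTheory.IndepFun.integral_comp_prod_eq_integral_integral
    {Ω α β E : Type*} [MeasurableSpace Ω] [MeasurableSpace α] [MeasurableSpace β]
    [NormedAddCommGroup E] [NormedSpace ℝ E] {P : Measure Ω} [IsFiniteMeasure P]
    {X : Ω → α} {Y : Ω → β} (hXY : IndepFun X Y P) (hX : AEMeasurable X P)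
    (hY : AEMeasurable Y P) {f : α × β → E} (hf : Integrable f ((P.map X).prod (P.map Y))) :
    ∫ ω, f (X ω, Y ω) ∂P = ∫ ω, ∫ y, f (X ω, y) ∂(P.map Y) ∂P := by
  have hlaw : P.map (fun ω ↦ (X ω, Y ω)) = (P.map X).prod (P.map Y) :=
    (indepFun_iff_map_prod_eq_prod_map_map hX hY).mp hXY
  rw [← integral_map (hX.prodMk hY) (hlaw ▸ hf.aestronglyMeasurable), hlaw, integral_prod f hf,
    integral_map hX hf.integral_prod_left.aestronglyMeasurable]

theorem integral_cexp_drift_add_sqrt_mul_gaussianReal (u β σ : ℝ) {t : ℝ} (ht : 0 ≤ t) :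
    ∫ z, cexp (I * u * (β * t + σ * √t * z)) ∂(gaussianReal 0 1)
      = cexp ((I * u * β - σ ^ 2 * u ^ 2 / 2) * t) := by
  have hsplit : ∀ z : ℝ, cexp (I * u * (β * t + σ * √t * z))
      = cexp (I * u * β * t) * cexp (↑(u * σ * √t) * z * I) := fun z ↦ by
    rw [← exp_add]; push_cast; ring_nf
  have hsqrt : ((√t : ℝ) : ℂ) ^ 2 = t := by rw [← ofReal_pow, Real.sq_sqrt ht]
  simp only [hsplit]
  rw [integral_const_mul, ← charFun_apply_real, charFun_gaussianReal, ← exp_add]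
  push_cast
  rw [mul_pow, mul_pow, hsqrt]
  ring_nf

/-- Characteristic function of a time-changed Brownian marginal: if `T ≥ 0` and `Z` is a
standard normal independent of `T`, then for every `u ∈ ℝ`,
`E[e^{iu(μ + βT + σ√T·Z)}] = e^{iuμ}·E[e^{(iuβ − σ²u²/2)T}]`. -/
theorem timeChanged_BM_characteristic_function
    {Ω : Type*} [MeasurableSpace Ω] (P : Measure Ω) [IsProbabilityMeasure P]
    (T Z : Ω → ℝ) (hTm : Measurable T) (hZm : Measurable Z)
    (hTnn : ∀ ω, 0 ≤ T ω)
    (hZlaw : P.map Z = gaussianReal 0 1)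
    (hindep : IndepFun Z T P)
    (μ β σ : ℝ) :
    ∀ u : ℝ,
      (∫ ω, Complex.exp (Complex.I * u * (μ + β * T ω + σ * Real.sqrt (T ω) * Z ω)) ∂P)
        = Complex.exp (Complex.I * u * μ) *
          ∫ ω, Complex.exp ((Complex.I * u * β - (σ : ℂ) ^ 2 * u ^ 2 / 2) * T ω) ∂P := by
  intro u
  set f : ℝ × ℝ → ℂ := fun p ↦ cexp (I * u * (β * p.1 + σ * √p.1 * p.2))
  have hf : Integrable f ((P.map T).prod (P.map Z)) :=
    .of_bound (by fun_prop) 1 (.of_forall fun p ↦ by simp [f, norm_exp])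
  calc ∫ ω, cexp (I * u * (μ + β * T ω + σ * √(T ω) * Z ω)) ∂P
      = ∫ ω, cexp (I * u * μ) * f (T ω, Z ω) ∂P := by
        congr 1 with ω
        rw [← exp_add]; ring_nf
    _ = cexp (I * u * μ) * ∫ ω, ∫ z, f (T ω, z) ∂(P.map Z) ∂P := by
        rw [integral_const_mul, hindep.symm.integral_comp_prod_eq_integral_integral
          hTm.aemeasurable hZm.aemeasurable hf]
    _ = _ := by
        simp only [f, hZlaw, integral_cexp_drift_add_sqrt_mul_gaussianReal u β σ (hTnn _)]
end

section
/- Let t > 0, α ∈ (0,2), θ > 0, μ, β ∈ ℝ, σ > 0. Let T be a nonnegative real random variable such that for every complex w with Re(w) ≤ 0, E[e^{wT}] = exp(−t·((θ − w)^{α/2} − θ^{α/2})) (principal complex power). Let Z be a standard normal random variable independent of T and set X = μt + βT + σ√T·Z. Then for every u ∈ ℝ, E[e^{iuX}] = exp(iμut − t·((θ − iβu + σ²u²/2)^{α/2} − θ^{α/2})). -/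
open MeasureTheory ProbabilityTheory Complex
open scoped NNReal

/-! Conditionally on `T`, the variable `μt + βT + σ√T·Z` is Gaussian with mean `μt + βT` and
variance `σ²T`, so its characteristic function at `u` is `E[exp(iuμt + wT)]` with
`w = iβu − σ²u²/2`. Since `Re w ≤ 0`, the extended Laplace transform of `T` evaluates this. -/

theorem ProbabilityTheory.IndepFun.integral_comp_prodMk_eq_integral_integral {Ω β γ E : Type*}
    [MeasurableSpace Ω] [MeasurableSpace β] [MeasurableSpace γ]
    [NormedAddCommGroup E] [NormedSpace ℝ E]
    {P : Measure Ω} [IsFiniteMeasure P] {X : Ω → β} {Y : Ω → γ}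
    (hXY : IndepFun X Y P) (hX : AEMeasurable X P) (hY : AEMeasurable Y P)
    {f : β × γ → E} (hf : Integrable f ((P.map X).prod (P.map Y))) :
    ∫ ω, f (X ω, Y ω) ∂P = ∫ x, ∫ y, f (x, y) ∂(P.map Y) ∂(P.map X) := by
  rw [← integral_prod _ hf, ← hXY.map_prod_eq_prod_map_map hX hY] at *
  exact (integral_map (hX.prodMk hY) hf.aestronglyMeasurable).symm

theorem integral_cexp_I_mul_gaussianReal (v : ℝ≥0) {s : ℝ} (hs : 0 ≤ s) (a b : ℝ) :
    ∫ z, cexp (I * (a * s + b * Real.sqrt s * z)) ∂gaussianReal 0 v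
      = cexp ((a * I - (v * b ^ 2 / 2 : ℝ)) * s) := by
  have hsqrt : (Real.sqrt s : ℂ) ^ 2 = s := by exact_mod_cast Real.sq_sqrt hs
  calc ∫ z, cexp (I * (a * s + b * Real.sqrt s * z)) ∂gaussianReal 0 v
      = ∫ z, cexp (a * I * s) * cexp (I * b * Real.sqrt s * z) ∂gaussianReal 0 v := by
        congr 1 with z
        rw [← Complex.exp_add]
        ring_nf
    _ = cexp (a * I * s) * complexMGF id (gaussianReal 0 v) (I * b * Real.sqrt s) :=
        integral_const_mul _ _
    _ = cexp ((a * I - (v * b ^ 2 / 2 : ℝ)) * s) := by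
        rw [complexMGF_id_gaussianReal, ← Complex.exp_add]
        congr 1
        push_cast
        linear_combination (-(v : ℂ) * b ^ 2 / 2) * hsqrt + (v * b ^ 2 * (Real.sqrt s) ^ 2 / 2) * I_sq

theorem integral_cexp_I_mul_normal_variance_mean_mixture {Ω : Type*} [MeasurableSpace Ω]
    {P : Measure Ω} [IsFiniteMeasure P] {T Z : Ω → ℝ} (hT : Measurable T) (hZ : Measurable Z)
    (hT_nonneg : ∀ᵐ ω ∂P, 0 ≤ T ω) {v : ℝ≥0} (hZ_law : P.map Z = gaussianReal 0 v)
    (hindep : IndepFun T Z P) (a b : ℝ) :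
    ∫ ω, cexp (I * (a * T ω + b * Real.sqrt (T ω) * Z ω)) ∂P
      = ∫ ω, cexp ((a * I - (v * b ^ 2 / 2 : ℝ)) * T ω) ∂P := by
  set f : ℝ × ℝ → ℂ := fun p ↦ cexp (I * ((a * p.1 + b * Real.sqrt p.1 * p.2 : ℝ) : ℂ))
  have hf : Integrable f ((P.map T).prod (P.map Z)) :=
    .of_bound (by fun_prop) 1 (ae_of_all _ fun p ↦ (norm_exp_I_mul_ofReal _).le)
  have hT_nonneg' : ∀ᵐ s ∂P.map T, 0 ≤ s :=
    (ae_map_iff hT.aemeasurable measurableSet_Ici).mpr hT_nonneg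
  calc ∫ ω, cexp (I * (a * T ω + b * Real.sqrt (T ω) * Z ω)) ∂P
      = ∫ s, ∫ z, f (s, z) ∂(P.map Z) ∂(P.map T) := by
        rw [← hindep.integral_comp_prodMk_eq_integral_integral hT.aemeasurable hZ.aemeasurable hf]
        simp only [f]
        push_cast
        rfl
    _ = ∫ s, cexp ((a * I - (v * b ^ 2 / 2 : ℝ)) * s) ∂(P.map T) := by
        refine integral_congr_ae (hT_nonneg'.mono fun s hs ↦ ?_)
        simpa [f, hZ_law] using integral_cexp_I_mul_gaussianReal v hs a b
    _ = ∫ ω, cexp ((a * I - (v * b ^ 2 / 2 : ℝ)) * T ω) ∂P :=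
        integral_map hT.aemeasurable (by fun_prop)

theorem gNTS_marginal_characteristic_function_general
    {Ω : Type*} [MeasurableSpace Ω] (P : Measure Ω) [IsProbabilityMeasure P]
    (t α θ μ β σ : ℝ)
    (T Z : Ω → ℝ) (hTm : Measurable T) (hZm : Measurable Z)
    (hTnn : ∀ ω, 0 ≤ T ω)
    (hTlaplace : ∀ w : ℂ, w.re ≤ 0 →
      (∫ ω, Complex.exp (w * T ω) ∂P)
        = Complex.exp (-(t : ℂ) * (((θ : ℂ) - w) ^ ((α : ℂ) / 2) - (θ : ℂ) ^ ((α : ℂ) / 2))))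
    (hZlaw : P.map Z = gaussianReal 0 1)
    (hindep : IndepFun Z T P) :
    ∀ u : ℝ,
      (∫ ω, Complex.exp (Complex.I * u * (μ * t + β * T ω + σ * Real.sqrt (T ω) * Z ω)) ∂P)
        = Complex.exp (Complex.I * μ * u * t -
            (t : ℂ) * (((θ : ℂ) - Complex.I * β * u + (σ : ℂ) ^ 2 * u ^ 2 / 2) ^ ((α : ℂ) / 2)
              - (θ : ℂ) ^ ((α : ℂ) / 2))) := by
  intro u
  set w : ℂ := (u * β : ℝ) * I - ((u * σ) ^ 2 / 2 : ℝ)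
  have hw_re : w.re ≤ 0 := by
    simp only [w, sub_re, re_ofReal_mul, I_re, mul_zero, ofReal_re, zero_sub, neg_nonpos]
    positivity
  have hθw : (θ : ℂ) - w = θ - I * β * u + (σ : ℂ) ^ 2 * u ^ 2 / 2 := by
    simp only [w]; push_cast; ring
  calc ∫ ω, cexp (I * u * (μ * t + β * T ω + σ * Real.sqrt (T ω) * Z ω)) ∂P
      = ∫ ω, cexp (I * μ * u * t) *
          cexp (I * ((u * β : ℝ) * T ω + (u * σ : ℝ) * Real.sqrt (T ω) * Z ω)) ∂P := by
        congr 1 with ω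
        rw [← Complex.exp_add]
        push_cast
        ring_nf
    _ = cexp (I * μ * u * t) * ∫ ω, cexp (w * T ω) ∂P := by
        rw [integral_const_mul, integral_cexp_I_mul_normal_variance_mean_mixture hTm hZm
          (ae_of_all _ hTnn) hZlaw hindep.symm, NNReal.coe_one, one_mul]
    _ = _ := by
        rw [hTlaplace w hw_re, hθw, ← Complex.exp_add]
        ring_nf

/-- Characteristic function of a gNTS marginal: if the (extended) Laplace transform of the
nonnegative random variable `T` is `E[e^{wT}] = exp(−t((θ − w)^{α/2} − θ^{α/2}))` for all
complex `w` with `Re w ≤ 0`, `Z` is a standard normal independent of `T`, and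
`X = μt + βT + σ√T·Z`, then `E[e^{iuX}] = exp(iμut − t((θ − iβu + σ²u²/2)^{α/2} − θ^{α/2}))`. -/
theorem gNTS_marginal_characteristic_function
    {Ω : Type*} [MeasurableSpace Ω] (P : Measure Ω) [IsProbabilityMeasure P]
    (t α θ μ β σ : ℝ) (ht : 0 < t) (hα : α ∈ Set.Ioo (0 : ℝ) 2) (hθ : 0 < θ) (hσ : 0 < σ)
    (T Z : Ω → ℝ) (hTm : Measurable T) (hZm : Measurable Z)
    (hTnn : ∀ ω, 0 ≤ T ω)
    (hTlaplace : ∀ w : ℂ, w.re ≤ 0 →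
      (∫ ω, Complex.exp (w * T ω) ∂P)
        = Complex.exp (-(t : ℂ) * (((θ : ℂ) - w) ^ ((α : ℂ) / 2) - (θ : ℂ) ^ ((α : ℂ) / 2))))
    (hZlaw : P.map Z = gaussianReal 0 1)
    (hindep : IndepFun Z T P) :
    ∀ u : ℝ,
      (∫ ω, Complex.exp (Complex.I * u * (μ * t + β * T ω + σ * Real.sqrt (T ω) * Z ω)) ∂P)
        = Complex.exp (Complex.I * μ * u * t -
            (t : ℂ) * (((θ : ℂ) - Complex.I * β * u + (σ : ℂ) ^ 2 * u ^ 2 / 2) ^ ((α : ℂ) / 2)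
              - (θ : ℂ) ^ ((α : ℂ) / 2))) :=
  gNTS_marginal_characteristic_function_general P t α θ μ β σ T Z hTm hZm hTnn hTlaplace hZlaw
    hindep
end

section
/- Let α ∈ (0,2), θ > 0, c > 0, t > 0, and let T be a nonnegative real random variable such that E[e^{−λT}] = exp(−ct·((θ + λ)^{α/2} − θ^{α/2})) for all λ ≥ 0. Then T and T² are integrable, E[T] = (ctα/2)·θ^{α/2−1}, and Var(T) = ct·(α/2)·(1 − α/2)·θ^{α/2−2}. -/
/-!
For `X ≥ 0` and `s > 0`, the functions `(1 - e^{-sX}) / s` and `2 (e^{-sX} - 1 + sX) / s²` are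
nonnegative, bounded by `X` and `X²`, and converge to them as `s → 0+`; their expectations are the
first and second order difference quotients of the Laplace transform `L(s) = E[e^{-sX}]` at `0`.
Fatou's lemma therefore makes `X` and `X²` integrable, and dominated convergence gives
`E[X] = -L'(0)` and `E[X²] = L''(0)`, which are then read off the closed form of `L`.
-/

open MeasureTheory ProbabilityTheory Filter Set Topology Real

theorem HasDerivAt.tendsto_sub_div_nhdsGT_zero {f : ℝ → ℝ} {f' : ℝ} (hf : HasDerivAt f f' 0) :
    Tendsto (fun s => (f 0 - f s) / s) (𝓝[>] 0) (𝓝 (-f')) := by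
  refine hf.tendsto_slope_zero_right.neg.congr fun s => ?_
  simp only [zero_add, smul_eq_mul]
  ring

theorem tendsto_taylor_two_div_sq_nhdsGT_zero {f f' : ℝ → ℝ} {f'' : ℝ}
    (hf : ∀ᶠ s in 𝓝 0, HasDerivAt f (f' s) s) (hf' : HasDerivAt f' f'' 0) :
    Tendsto (fun s => (f s - f 0 - s * f' 0) / s ^ 2) (𝓝[>] 0) (𝓝 (f'' / 2)) := by
  have hslope : Tendsto (fun s => (f' s - f' 0) / (2 * s)) (𝓝[>] 0) (𝓝 (f'' / 2)) := by
    refine (hf'.tendsto_slope_zero_right.div_const 2).congr fun s => ?_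
    simp only [zero_add, smul_eq_mul]
    field_simp
  refine HasDerivAt.lhopital_zero_nhdsGT ?_ ?_ ?_ ?_ ?_ hslope
  · filter_upwards [nhdsWithin_le_nhds hf] with s hs
    have h : HasDerivAt (fun s => f s - f 0 - s * f' 0) (f' s - 1 * f' 0) s :=
      (hs.sub_const (f 0)).sub ((hasDerivAt_id s).mul_const (f' 0))
    simpa using h
  · exact Eventually.of_forall fun s => by simpa using hasDerivAt_pow 2 s
  · filter_upwards [self_mem_nhdsWithin] with s (hs : 0 < s)
    positivity
  · have hcont : ContinuousAt (fun s => f s - f 0 - s * f' 0) 0 :=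
      (hf.self_of_nhds.continuousAt.sub continuousAt_const).sub
        (continuousAt_id.mul continuousAt_const)
    simpa using hcont.tendsto.mono_left nhdsWithin_le_nhds
  · have hcont : ContinuousAt (fun s : ℝ => s ^ 2) 0 := (continuous_pow 2).continuousAt
    simpa using hcont.tendsto.mono_left (nhdsWithin_le_nhds (s := Ioi 0))

theorem exp_neg_sub_one_add_le {u : ℝ} (hu : 0 ≤ u) : exp (-u) - 1 + u ≤ u ^ 2 / 2 := by
  have hquad := quadratic_le_exp_of_nonneg hu
  have hinv : exp (-u) * exp u = 1 := by rw [← exp_add, neg_add_cancel, exp_zero]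
  nlinarith [mul_le_mul_of_nonneg_left hquad (exp_pos (-u)).le, sq_nonneg u, sq_nonneg (u * u)]

section Fatou
variable {Ω : Type*} [MeasurableSpace Ω] {μ : Measure Ω}

theorem integrable_and_integral_eq_of_tendsto_of_le {ι : Type*} {l : Filter ι} [l.NeBot]
    [l.IsCountablyGenerated] {g : ι → Ω → ℝ} {h : Ω → ℝ} {m : ℝ}
    (hg_meas : ∀ i, AEStronglyMeasurable (g i) μ) (hg_int : ∀ᶠ i in l, Integrable (g i) μ)
    (hg_nonneg : ∀ᶠ i in l, 0 ≤ᵐ[μ] g i) (hg_le : ∀ᶠ i in l, g i ≤ᵐ[μ] h)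
    (hg_lim : ∀ᵐ ω ∂μ, Tendsto (fun i => g i ω) l (𝓝 (h ω)))
    (hm : Tendsto (fun i => ∫ ω, g i ω ∂μ) l (𝓝 m)) :
    Integrable h μ ∧ ∫ ω, h ω ∂μ = m := by
  have h_nonneg : 0 ≤ᵐ[μ] h := by
    obtain ⟨i, hi_nonneg, hi_le⟩ := (hg_nonneg.and hg_le).exists
    filter_upwards [hi_nonneg, hi_le] with ω h0 h1 using h0.trans h1
  have h_lintegral : ∫⁻ ω, ENNReal.ofReal (h ω) ∂μ ≤ ENNReal.ofReal m :=
    calc ∫⁻ ω, ENNReal.ofReal (h ω) ∂μ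
        = ∫⁻ ω, liminf (fun i => ENNReal.ofReal (g i ω)) l ∂μ := by
          refine lintegral_congr_ae ?_
          filter_upwards [hg_lim] with ω hω
          exact ((ENNReal.continuous_ofReal.tendsto _).comp hω).liminf_eq.symm
      _ ≤ liminf (fun i => ∫⁻ ω, ENNReal.ofReal (g i ω) ∂μ) l :=
          lintegral_liminf_le' fun i => (hg_meas i).aemeasurable.ennreal_ofReal
      _ = liminf (fun i => ENNReal.ofReal (∫ ω, g i ω ∂μ)) l := by
          refine liminf_congr ?_
          filter_upwards [hg_int, hg_nonneg] with i hi hi0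
          exact (ofReal_integral_eq_lintegral_ofReal hi hi0).symm
      _ = ENNReal.ofReal m := ((ENNReal.continuous_ofReal.tendsto m).comp hm).liminf_eq
  have h_int : Integrable h μ :=
    ⟨aestronglyMeasurable_of_tendsto_ae l hg_meas hg_lim,
      (hasFiniteIntegral_iff_ofReal h_nonneg).2 (h_lintegral.trans_lt ENNReal.ofReal_lt_top)⟩
  refine ⟨h_int, tendsto_nhds_unique ?_ hm⟩
  refine tendsto_integral_filter_of_dominated_convergence h
    (Eventually.of_forall hg_meas) ?_ h_int hg_lim
  filter_upwards [hg_nonneg, hg_le] with i hi0 hi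
  filter_upwards [hi0, hi] with ω h0 h1
  rwa [norm_of_nonneg h0]

end Fatou

section Moments
variable {Ω : Type*} [MeasurableSpace Ω] {μ : Measure Ω} [IsFiniteMeasure μ] {X : Ω → ℝ}

theorem integrable_exp_neg_mul_of_nonneg (hXm : AEMeasurable X μ) (hX0 : ∀ ω, 0 ≤ X ω) {s : ℝ}
    (hs : 0 ≤ s) : Integrable (fun ω => exp (-s * X ω)) μ := by
  refine .of_bound (hXm.const_mul _).exp.aestronglyMeasurable 1 (ae_of_all _ fun ω => ?_)
  rw [norm_of_nonneg (exp_pos _).le, exp_le_one_iff, neg_mul]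
  exact neg_nonpos.2 (mul_nonneg hs (hX0 ω))

theorem integrable_and_integral_eq_of_mgf_neg_eq {f : ℝ → ℝ} {f' : ℝ} (hXm : AEMeasurable X μ)
    (hX0 : ∀ ω, 0 ≤ X ω) (hf : ∀ s, 0 ≤ s → mgf X μ (-s) = f s) (hf' : HasDerivAt f f' 0) :
    Integrable X μ ∧ μ[X] = -f' := by
  have hf0 : f 0 = μ.real univ := by rw [← hf 0 le_rfl, neg_zero, mgf_zero']
  refine integrable_and_integral_eq_of_tendsto_of_le (l := 𝓝[>] 0)
    (g := fun s ω => (1 - exp (-s * X ω)) / s) (fun s => ?_) ?_ ?_ ?_ ?_ ?_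
  · exact ((aemeasurable_const.sub (hXm.const_mul _).exp).div_const _).aestronglyMeasurable
  · filter_upwards [self_mem_nhdsWithin] with s (hs : 0 < s)
    exact ((integrable_const 1).sub (integrable_exp_neg_mul_of_nonneg hXm hX0 hs.le)).div_const s
  · filter_upwards [self_mem_nhdsWithin] with s (hs : 0 < s)
    refine ae_of_all _ fun ω => div_nonneg (sub_nonneg.2 ?_) hs.le
    rw [exp_le_one_iff, neg_mul]
    exact neg_nonpos.2 (mul_nonneg hs.le (hX0 ω))
  · filter_upwards [self_mem_nhdsWithin] with s (hs : 0 < s)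
    refine ae_of_all _ fun ω => (div_le_iff₀ hs).2 ?_
    rw [neg_mul]
    linarith [one_sub_le_exp_neg (s * X ω)]
  · refine ae_of_all _ fun ω => ?_
    have hd : HasDerivAt (fun s => exp (-s * X ω)) (-X ω) 0 := by
      simpa using ((hasDerivAt_neg 0).mul_const (X ω)).exp
    simpa using hd.tendsto_sub_div_nhdsGT_zero
  · refine hf'.tendsto_sub_div_nhdsGT_zero.congr' ?_
    filter_upwards [self_mem_nhdsWithin] with s (hs : 0 < s)
    rw [integral_div, integral_sub (integrable_const 1)
      (integrable_exp_neg_mul_of_nonneg hXm hX0 hs.le), integral_const, ← hf s hs.le, hf0]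
    simp [mgf]

theorem integrable_sq_and_integral_sq_eq_of_mgf_neg_eq {f f' : ℝ → ℝ} {f'' : ℝ}
    (hXm : AEMeasurable X μ) (hX0 : ∀ ω, 0 ≤ X ω) (hf : ∀ s, 0 ≤ s → mgf X μ (-s) = f s)
    (hf' : ∀ᶠ s in 𝓝 0, HasDerivAt f (f' s) s) (hf'' : HasDerivAt f' f'' 0) :
    Integrable (fun ω => X ω ^ 2) μ ∧ ∫ ω, X ω ^ 2 ∂μ = f'' := by
  obtain ⟨hX_int, hX_mean⟩ := integrable_and_integral_eq_of_mgf_neg_eq hXm hX0 hf hf'.self_of_nhds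
  have hf0 : f 0 = μ.real univ := by rw [← hf 0 le_rfl, neg_zero, mgf_zero']
  have hg_int : ∀ s, 0 ≤ s → Integrable (fun ω => exp (-s * X ω) - 1 + s * X ω) μ := fun s hs =>
    ((integrable_exp_neg_mul_of_nonneg hXm hX0 hs).sub (integrable_const 1)).add
      (hX_int.const_mul s)
  refine integrable_and_integral_eq_of_tendsto_of_le (l := 𝓝[>] 0)
    (g := fun s ω => 2 * (exp (-s * X ω) - 1 + s * X ω) / s ^ 2) (fun s => ?_) ?_ ?_ ?_ ?_ ?_
  · exact ((((hXm.const_mul _).exp.sub aemeasurable_const).add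
      (hXm.const_mul s)).const_mul 2 |>.div_const _).aestronglyMeasurable
  · filter_upwards [self_mem_nhdsWithin] with s (hs : 0 < s)
    exact ((hg_int s hs.le).const_mul 2).div_const _
  · filter_upwards [self_mem_nhdsWithin] with s (hs : 0 < s)
    refine ae_of_all _ fun ω => div_nonneg ?_ (sq_nonneg s)
    rw [neg_mul]
    linarith [one_sub_le_exp_neg (s * X ω)]
  · filter_upwards [self_mem_nhdsWithin] with s (hs : 0 < s)
    refine ae_of_all _ fun ω => (div_le_iff₀ (by positivity)).2 ?_
    have := exp_neg_sub_one_add_le (mul_nonneg hs.le (hX0 ω))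
    rw [neg_mul]
    linarith
  · refine ae_of_all _ fun ω => ?_
    have hd : ∀ s, HasDerivAt (fun s => exp (-s * X ω)) (-X ω * exp (-s * X ω)) s := fun s => by
      simpa [mul_comm] using ((hasDerivAt_neg s).mul_const (X ω)).exp
    have hd2 : HasDerivAt (fun s => -X ω * exp (-s * X ω)) (X ω ^ 2) 0 := by
      simpa [sq] using (hd 0).const_mul (-X ω)
    have := (tendsto_taylor_two_div_sq_nhdsGT_zero (.of_forall hd) hd2).const_mul 2
    rw [mul_div_cancel₀ _ two_ne_zero] at this
    refine this.congr fun s => ?_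
    simp only [neg_mul, zero_mul, neg_zero, exp_zero, mul_one]
    ring
  · have := (tendsto_taylor_two_div_sq_nhdsGT_zero hf' hf'').const_mul 2
    rw [mul_div_cancel₀ _ two_ne_zero] at this
    refine this.congr' ?_
    filter_upwards [self_mem_nhdsWithin] with s (hs : 0 < s)
    have hexp := integrable_exp_neg_mul_of_nonneg hXm hX0 hs.le
    have hsplit : ∫ ω, exp (-s * X ω) - 1 + s * X ω ∂μ = f s - f 0 - s * f' 0 := by
      rw [integral_add (f := fun ω => exp (-s * X ω) - 1) (hexp.sub (integrable_const 1))
        (hX_int.const_mul s), integral_sub hexp (integrable_const 1), integral_const,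
        integral_const_mul, hX_mean, ← hf s hs.le, hf0]
      simp only [mgf, smul_eq_mul, mul_one]
      ring
    rw [integral_div, integral_const_mul, hsplit, mul_div_assoc]

end Moments

/-- `E[e^{-s T(t)}]` for `T ∼ subTS(α, c, θ)`, with `a = c t` and `p = α / 2`. -/
noncomputable def temperedStableLaplace (a θ p s : ℝ) : ℝ :=
  exp (-a * ((θ + s) ^ p - θ ^ p))

section TemperedStableLaplace
variable {a θ p : ℝ}

@[simp]
theorem temperedStableLaplace_zero : temperedStableLaplace a θ p 0 = 1 := by
  simp [temperedStableLaplace]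

theorem hasDerivAt_temperedStableLaplace {s : ℝ} (hs : 0 < θ + s) :
    HasDerivAt (temperedStableLaplace a θ p)
      (-(a * p) * (θ + s) ^ (p - 1) * temperedStableLaplace a θ p s) s := by
  have hpow : HasDerivAt (fun s => (θ + s) ^ p) (1 * p * (θ + s) ^ (p - 1)) s :=
    ((hasDerivAt_id s).const_add θ).rpow_const (.inl hs.ne')
  exact ((hpow.sub_const (θ ^ p)).const_mul (-a)).exp.congr_deriv (by
    rw [temperedStableLaplace]; ring)

theorem hasDerivAt_deriv_temperedStableLaplace_zero (hθ : 0 < θ) :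
    HasDerivAt (fun s => -(a * p) * (θ + s) ^ (p - 1) * temperedStableLaplace a θ p s)
      ((a * p * θ ^ (p - 1)) ^ 2 + a * p * (1 - p) * θ ^ (p - 2)) 0 := by
  have hpow : HasDerivAt (fun s => (θ + s) ^ (p - 1)) (1 * (p - 1) * (θ + 0) ^ (p - 1 - 1)) 0 :=
    ((hasDerivAt_id 0).const_add θ).rpow_const (.inl (by simpa using hθ.ne'))
  refine ((hpow.const_mul (-(a * p))).mul
    (hasDerivAt_temperedStableLaplace (a := a) (p := p) (by simpa using hθ))).congr_deriv ?_
  rw [add_zero, temperedStableLaplace_zero, show p - 1 - 1 = p - 2 by ring]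
  ring

end TemperedStableLaplace

theorem tempered_stable_subordinator_moments_general
    {Ω : Type*} [MeasurableSpace Ω] (P : Measure Ω) [IsProbabilityMeasure P]
    (α θ c t : ℝ) (hθ : 0 < θ)
    (T : Ω → ℝ) (hTm : Measurable T) (hTnn : ∀ ω, 0 ≤ T ω)
    (hTlaplace : ∀ lam : ℝ, 0 ≤ lam →
      (∫ ω, Real.exp (-lam * T ω) ∂P)
        = Real.exp (-(c * t) * ((θ + lam) ^ (α / 2) - θ ^ (α / 2)))) :
    Integrable T P ∧ Integrable (fun ω => T ω ^ 2) P ∧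
    (∫ ω, T ω ∂P) = c * t * α / 2 * θ ^ (α / 2 - 1) ∧
    variance T P = c * t * (α / 2) * (1 - α / 2) * θ ^ (α / 2 - 2) := by
  have hmgf : ∀ s, 0 ≤ s → mgf T P (-s) = temperedStableLaplace (c * t) θ (α / 2) s := hTlaplace
  have hderiv : ∀ᶠ s in 𝓝 0, HasDerivAt (temperedStableLaplace (c * t) θ (α / 2))
      (-(c * t * (α / 2)) * (θ + s) ^ (α / 2 - 1) *
        temperedStableLaplace (c * t) θ (α / 2) s) s := by
    filter_upwards [Ioi_mem_nhds (neg_neg_of_pos hθ)] with s (hs : -θ < s)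
    exact hasDerivAt_temperedStableLaplace (by linarith)
  obtain ⟨hT_int, hT_mean⟩ :=
    integrable_and_integral_eq_of_mgf_neg_eq hTm.aemeasurable hTnn hmgf hderiv.self_of_nhds
  obtain ⟨hT2_int, hT2_mean⟩ := integrable_sq_and_integral_sq_eq_of_mgf_neg_eq hTm.aemeasurable
    hTnn hmgf hderiv (hasDerivAt_deriv_temperedStableLaplace_zero hθ)
  refine ⟨hT_int, hT2_int, ?_, ?_⟩
  · rw [hT_mean, add_zero, temperedStableLaplace_zero]
    ring
  · rw [variance_eq_sub ((memLp_two_iff_integrable_sq hTm.aestronglyMeasurable).2 hT2_int)]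
    simp only [Pi.pow_apply, hT2_mean, hT_mean, add_zero, temperedStableLaplace_zero]
    ring

/-- Moments of the tempered stable subordinator from its Laplace transform: if
`E[e^{−λT}] = exp(−ct((θ + λ)^{α/2} − θ^{α/2}))` for all `λ ≥ 0`, then `T` and `T²` are
integrable, `E[T] = (ctα/2)·θ^{α/2−1}` and `Var(T) = ct·(α/2)·(1 − α/2)·θ^{α/2−2}`. -/
theorem tempered_stable_subordinator_moments
    {Ω : Type*} [MeasurableSpace Ω] (P : Measure Ω) [IsProbabilityMeasure P]
    (α θ c t : ℝ) (hα : α ∈ Set.Ioo (0 : ℝ) 2) (hθ : 0 < θ) (hc : 0 < c) (ht : 0 < t)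
    (T : Ω → ℝ) (hTm : Measurable T) (hTnn : ∀ ω, 0 ≤ T ω)
    (hTlaplace : ∀ lam : ℝ, 0 ≤ lam →
      (∫ ω, Real.exp (-lam * T ω) ∂P)
        = Real.exp (-(c * t) * ((θ + lam) ^ (α / 2) - θ ^ (α / 2)))) :
    Integrable T P ∧ Integrable (fun ω => T ω ^ 2) P ∧
    (∫ ω, T ω ∂P) = c * t * α / 2 * θ ^ (α / 2 - 1) ∧
    variance T P = c * t * (α / 2) * (1 - α / 2) * θ ^ (α / 2 - 2) :=
  tempered_stable_subordinator_moments_general P α θ c t hθ T hTm hTnn hTlaplace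
end

section
/- Let α ∈ (0,2), θ > 0, β ∈ ℝ, μ ∈ ℝ and σ > 0. Define m = μ + (αβ/2)·θ^{α/2−1}, s = √((α/2)·θ^{α/2−1}·(((2−α)/(2θ))β² + σ²)) and β̄ = β/s. Then: (i) s > 0; (ii) |β̄| < 2θ^{1−α/4}/√(α(2−α)); (iii) s·β̄ = β; (iv) m + s·(−(αβ̄/2)θ^{α/2−1}) = μ; and (v) s·√((2/α)θ^{1−α/2} − ((2−α)/(2θ))β̄²) = σ. -/
/-!
With `k = (α/2)θ^{α/2-1}` and `c = (2-α)/(2θ)` the scale is `s = √(k(cβ² + σ²))`, and the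
squared standard scale `σ₀(β̄)² = (2/α)θ^{1-α/2} - cβ̄²` is `k⁻¹ - c(β/s)²`. Since `s² = kcβ² + kσ²`, this
is exactly `(σ/s)²`, which gives (v); its positivity is condition (ii), i.e. `β̄² < k⁻¹/c`,
and `k⁻¹/c` is the square of `2θ^{1-α/4}/√(α(2-α))`.
-/

open Real

theorem inv_sub_mul_div_sq {k c β σ s : ℝ} (hk : k ≠ 0) (hs : s ≠ 0)
    (hs2 : s ^ 2 = k * (c * β ^ 2 + σ ^ 2)) :
    k⁻¹ - c * (β / s) ^ 2 = (σ / s) ^ 2 := by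
  field_simp
  linear_combination hs2

theorem mul_sqrt_inv_sub_mul_div_sq {k c β σ s : ℝ} (hk : k ≠ 0) (hs : 0 < s) (hσ : 0 ≤ σ)
    (hs2 : s ^ 2 = k * (c * β ^ 2 + σ ^ 2)) :
    s * √(k⁻¹ - c * (β / s) ^ 2) = σ := by
  rw [inv_sub_mul_div_sq hk hs.ne' hs2, sqrt_sq (div_nonneg hσ hs.le), mul_div_cancel₀ _ hs.ne']

theorem abs_div_lt_of_sq_eq_inv_div {k c β σ s R : ℝ} (hk : 0 < k) (hc : 0 < c) (hs : s ≠ 0)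
    (hσ : σ ≠ 0) (hs2 : s ^ 2 = k * (c * β ^ 2 + σ ^ 2)) (hR : 0 ≤ R)
    (hR2 : R ^ 2 = k⁻¹ / c) :
    |β / s| < R := by
  have hpos : 0 < k⁻¹ - c * (β / s) ^ 2 := by
    rw [inv_sub_mul_div_sq hk.ne' hs hs2]
    have := div_ne_zero hσ hs
    positivity
  refine abs_lt_of_sq_lt_sq ?_ hR
  rw [hR2, lt_div_iff₀ hc]
  linarith

theorem inv_half_mul_rpow_sub_one {α θ : ℝ} (hθ : 0 < θ) :
    (α / 2 * θ ^ (α / 2 - 1))⁻¹ = 2 / α * θ ^ (1 - α / 2) := by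
  rw [mul_inv, inv_div, ← rpow_neg hθ.le, neg_sub]

theorem sq_two_mul_rpow_div_sqrt {α θ : ℝ} (hα : α ∈ Set.Ioo (0 : ℝ) 2) (hθ : 0 < θ) :
    (2 * θ ^ (1 - α / 4) / √(α * (2 - α))) ^ 2 = 2 / α * θ ^ (1 - α / 2) / ((2 - α) / (2 * θ)) := by
  obtain ⟨hα0, hα2⟩ := hα
  have h2α : 2 - α ≠ 0 := by linarith
  have hpow : (θ ^ (1 - α / 4)) ^ 2 = θ * θ ^ (1 - α / 2) := by
    rw [← rpow_two, ← rpow_mul hθ.le, ← rpow_one_add' hθ.le (by linarith)]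
    ring_nf
  rw [div_pow, mul_pow, sq_sqrt (by nlinarith), hpow]
  field_simp

/-- Parameter identities for decomposing a gNTS process into mean, scale and a standard gNTS
process (Proposition 3(b)): with `m = μ + (αβ/2)θ^{α/2−1}`,
`s = √((α/2)θ^{α/2−1}(((2−α)/(2θ))β² + σ²))` and `β̄ = β/s`, one has `s > 0`,
`|β̄| < 2θ^{1−α/4}/√(α(2−α))`, `s·β̄ = β`, `m + s·(−(αβ̄/2)θ^{α/2−1}) = μ` and
`s·√((2/α)θ^{1−α/2} − ((2−α)/(2θ))β̄²) = σ`. -/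
theorem gNTS_standardization_parameters
    (α θ β μ σ : ℝ) (hα : α ∈ Set.Ioo (0 : ℝ) 2) (hθ : 0 < θ) (hσ : 0 < σ) :
    let m : ℝ := μ + α * β / 2 * θ ^ (α / 2 - 1)
    let s : ℝ := Real.sqrt (α / 2 * θ ^ (α / 2 - 1) * ((2 - α) / (2 * θ) * β ^ 2 + σ ^ 2))
    let βbar : ℝ := β / s
    0 < s ∧
    |βbar| < 2 * θ ^ (1 - α / 4) / Real.sqrt (α * (2 - α)) ∧
    s * βbar = β ∧
    m + s * (-(α * βbar / 2) * θ ^ (α / 2 - 1)) = μ ∧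
    s * Real.sqrt (2 / α * θ ^ (1 - α / 2) - (2 - α) / (2 * θ) * βbar ^ 2) = σ := by
  intro m s βbar
  have hk : 0 < α / 2 * θ ^ (α / 2 - 1) := mul_pos (half_pos hα.1) (rpow_pos_of_pos hθ _)
  have hc : 0 < (2 - α) / (2 * θ) := div_pos (by linarith [hα.2]) (by positivity)
  have hs : 0 < s := sqrt_pos.mpr (by positivity)
  have hs2 : s ^ 2 = α / 2 * θ ^ (α / 2 - 1) * ((2 - α) / (2 * θ) * β ^ 2 + σ ^ 2) :=
    sq_sqrt (by positivity)
  have hsβ : s * βbar = β := mul_div_cancel₀ β hs.ne'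
  refine ⟨hs, ?_, hsβ, ?_, ?_⟩
  · refine abs_div_lt_of_sq_eq_inv_div hk hc hs.ne' hσ.ne' hs2 (by positivity) ?_
    rw [inv_half_mul_rpow_sub_one hθ, sq_two_mul_rpow_div_sqrt hα hθ]
  · linear_combination (-(α / 2) * θ ^ (α / 2 - 1)) * hsβ
  · rw [← inv_half_mul_rpow_sub_one hθ]
    exact mul_sqrt_inv_sub_mul_div_sq hk.ne' hs hσ.le hs2
end

section
/- Let T > 0 be a real number, α ∈ (0,2), θ > 0, β ∈ ℝ, σ ≥ 0, μ ∈ ℝ and u ∈ ℝ. Then, with principal complex powers, T·(θ − iβu + σ²u²/2)^{α/2} = (θT^{2/α} − i·(βT^{2/α})·u + (σT^{1/α})²·u²/2)^{α/2}. Consequently, exp(iμTu − T·((θ − iβu + σ²u²/2)^{α/2} − θ^{α/2})) = exp(i(μT)u − ((θ_Y − iβ_Y u + σ_Y²u²/2)^{α/2} − θ_Y^{α/2})), where θ_Y = θT^{2/α}, β_Y = βT^{2/α}, σ_Y = σT^{1/α}. -/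
/-!
For `r > 0` the principal power satisfies `(r z) ^ w = r ^ w z ^ w`, since `log (r z) = log r + log z`
for every `z ≠ 0`. Taking `r = T ^ (2/α)`, so that `r ^ (α/2) = T`, the factor `T` is absorbed into
the base, and `r` times `θ − iβu + σ²u²/2` is the base with the rescaled parameters because
`(σ T ^ (1/α))² = σ² r`. The same applies to `T θ ^ (α/2)`, which gives the characteristic functions.
-/

open Complex

lemma Complex.ofReal_mul_cpow {r : ℝ} (hr : 0 < r) (z w : ℂ) :
    ((r : ℂ) * z) ^ w = (r : ℂ) ^ w * z ^ w := by
  rcases eq_or_ne z 0 with rfl | hz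
  · rcases eq_or_ne w 0 with rfl | hw <;> simp [*]
  have hr0 : (r : ℂ) ≠ 0 := ofReal_ne_zero.mpr hr.ne'
  rw [cpow_def_of_ne_zero (mul_ne_zero hr0 hz), cpow_def_of_ne_zero hr0, cpow_def_of_ne_zero hz,
    log_ofReal_mul hr hz, ← ofReal_log hr.le, add_mul, exp_add]

lemma Complex.ofReal_mul_cpow_ofReal_eq_rpow_inv_mul_cpow {T a : ℝ} (hT : 0 < T) (ha : a ≠ 0)
    (z : ℂ) :
    (T : ℂ) * z ^ (a : ℂ) = (((T ^ a⁻¹ : ℝ) : ℂ) * z) ^ (a : ℂ) := by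
  rw [ofReal_mul_cpow (Real.rpow_pos_of_pos hT _), ← ofReal_cpow (Real.rpow_nonneg hT.le _),
    Real.rpow_inv_rpow hT.le ha]

theorem gNTS_characteristic_function_time_rescaling_general
    (T α θ β σ μ u : ℝ) (hT : 0 < T) (hα : α ∈ Set.Ioo (0 : ℝ) 2) :
    (T : ℂ) * ((θ : ℂ) - Complex.I * β * u + (σ : ℂ) ^ 2 * u ^ 2 / 2) ^ ((α : ℂ) / 2)
      = (((θ * T ^ (2 / α) : ℝ) : ℂ) - Complex.I * ((β * T ^ (2 / α) : ℝ) : ℂ) * u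
          + ((σ * T ^ (1 / α) : ℝ) : ℂ) ^ 2 * u ^ 2 / 2) ^ ((α : ℂ) / 2) ∧
    Complex.exp (Complex.I * μ * T * u -
        (T : ℂ) * (((θ : ℂ) - Complex.I * β * u + (σ : ℂ) ^ 2 * u ^ 2 / 2) ^ ((α : ℂ) / 2)
          - (θ : ℂ) ^ ((α : ℂ) / 2)))
      = Complex.exp (Complex.I * ((μ * T : ℝ) : ℂ) * u -
          ((((θ * T ^ (2 / α) : ℝ) : ℂ) - Complex.I * ((β * T ^ (2 / α) : ℝ) : ℂ) * u
              + ((σ * T ^ (1 / α) : ℝ) : ℂ) ^ 2 * u ^ 2 / 2) ^ ((α : ℂ) / 2)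
            - (((θ * T ^ (2 / α) : ℝ) : ℂ)) ^ ((α : ℂ) / 2))) := by
  have hα0 : α ≠ 0 := hα.1.ne'
  have hsq : (T ^ (1 / α)) ^ 2 = T ^ (2 / α) := by
    rw [← Real.rpow_natCast, ← Real.rpow_mul hT.le]
    ring_nf
  have scale (z : ℂ) :
      (T : ℂ) * z ^ ((α : ℂ) / 2) = (((T ^ (2 / α) : ℝ) : ℂ) * z) ^ ((α : ℂ) / 2) := by
    have := ofReal_mul_cpow_ofReal_eq_rpow_inv_mul_cpow hT (div_ne_zero hα0 two_ne_zero) z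
    rwa [inv_div, ofReal_div, ofReal_ofNat] at this
  have main := scale ((θ : ℂ) - Complex.I * β * u + (σ : ℂ) ^ 2 * u ^ 2 / 2)
  rw [show ((σ * T ^ (1 / α) : ℝ) : ℂ) ^ 2 = σ ^ 2 * ((T ^ (2 / α) : ℝ) : ℂ) by
    rw [ofReal_mul, mul_pow, ← hsq, ofReal_pow]]
  refine ⟨by rw [main]; push_cast; ring_nf, ?_⟩
  rw [mul_sub, main, scale θ]
  push_cast
  ring_nf

/-- Time-rescaling of the gNTS characteristic exponent: with principal complex powers,
`T·(θ − iβu + σ²u²/2)^{α/2} = (θT^{2/α} − i(βT^{2/α})u + (σT^{1/α})²u²/2)^{α/2}`, and hence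
the characteristic function of the gNTS marginal at time `T` equals the characteristic
function at time `1` of the gNTS process with parameters `θ_Y = θT^{2/α}`, `β_Y = βT^{2/α}`,
`μ_Y = μT`, `σ_Y = σT^{1/α}`. -/
theorem gNTS_characteristic_function_time_rescaling
    (T α θ β σ μ u : ℝ) (hT : 0 < T) (hα : α ∈ Set.Ioo (0 : ℝ) 2) (hθ : 0 < θ)
    (hσ : 0 ≤ σ) :
    (T : ℂ) * ((θ : ℂ) - Complex.I * β * u + (σ : ℂ) ^ 2 * u ^ 2 / 2) ^ ((α : ℂ) / 2)
      = (((θ * T ^ (2 / α) : ℝ) : ℂ) - Complex.I * ((β * T ^ (2 / α) : ℝ) : ℂ) * u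
          + ((σ * T ^ (1 / α) : ℝ) : ℂ) ^ 2 * u ^ 2 / 2) ^ ((α : ℂ) / 2) ∧
    Complex.exp (Complex.I * μ * T * u -
        (T : ℂ) * (((θ : ℂ) - Complex.I * β * u + (σ : ℂ) ^ 2 * u ^ 2 / 2) ^ ((α : ℂ) / 2)
          - (θ : ℂ) ^ ((α : ℂ) / 2)))
      = Complex.exp (Complex.I * ((μ * T : ℝ) : ℂ) * u -
          ((((θ * T ^ (2 / α) : ℝ) : ℂ) - Complex.I * ((β * T ^ (2 / α) : ℝ) : ℂ) * u
              + ((σ * T ^ (1 / α) : ℝ) : ℂ) ^ 2 * u ^ 2 / 2) ^ ((α : ℂ) / 2)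
            - (((θ * T ^ (2 / α) : ℝ) : ℂ)) ^ ((α : ℂ) / 2))) :=
  gNTS_characteristic_function_time_rescaling_general T α θ β σ μ u hT hα
end

section
/- Let N be a positive integer, A ⊆ {1,…,N}, and s, t : ℝ^N → ℝ^N differentiable functions. Let b⊙y denote the masked vector with (b⊙y)_i = y_i for i ∈ A and 0 otherwise, and define f : ℝ^N → ℝ^N by f(y)_i = y_i for i ∈ A and f(y)_i = (y_i − t_i(b⊙y))·exp(−s_i(b⊙y)) for i ∉ A. Then f is differentiable at every y ∈ ℝ^N and the determinant of its derivative satisfies det(Df(y)) = exp(−∑_{i∉A} s_i(b⊙y)). -/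
/-!
The derivative of the coupling layer fixes every coordinate in `A`. Along a coordinate direction
`e j` with `j ∉ A` the mask `b ⊙ y` does not move, so the layer is affine on that line with slope
`exp (-s j (b ⊙ y)) • e j`. Hence the Jacobian matrix is block triangular, with an identity block
on `A` and a diagonal block on its complement.
-/

open Finset

section

variable {𝕜 E F : Type*} [NontriviallyNormedField 𝕜] [NormedAddCommGroup E] [NormedSpace 𝕜 E]
  [NormedAddCommGroup F] [NormedSpace 𝕜 F]

theorem HasFDerivAt.apply_eq_of_add_smul {f : E → F} {L : E →L[𝕜] F} {x v : E} {w : F}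
    (hf : HasFDerivAt f L x) (h : ∀ τ : 𝕜, f (x + τ • v) = f x + τ • w) : L v = w := by
  have hline : HasLineDerivAt 𝕜 f w x v := by
    simpa only [HasLineDerivAt, h, one_smul] using
      ((hasDerivAt_id' (0 : 𝕜)).smul_const w).const_add (f x)
  exact (hf.hasLineDerivAt v).unique hline

theorem HasFDerivAt.apply_apply_eq_of_apply_eq {ι : Type*} [Fintype ι] {f : (ι → 𝕜) → ι → 𝕜}
    {L : (ι → 𝕜) →L[𝕜] ι → 𝕜} {x : ι → 𝕜} {i : ι} (hf : HasFDerivAt f L x)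
    (h : ∀ z, f z i = z i) (v : ι → 𝕜) : L v i = v i := by
  have hfi : HasFDerivAt (fun z => f z i) ((ContinuousLinearMap.proj i).comp L) x :=
    hasFDerivAt_pi'.1 hf i
  simp only [h] at hfi
  exact congrArg (· v) (hfi.unique (hasFDerivAt_apply i x))

end

namespace LinearMap

variable {R ι : Type*} [CommRing R] [Fintype ι] [DecidableEq ι]

theorem det_eq_prod_of_apply_eq_self_of_apply_single (L : (ι → R) →ₗ[R] ι → R) (A : Set ι)
    [DecidablePred (· ∈ A)] (d : ι → R) (hA : ∀ i ∈ A, ∀ v, L v i = v i)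
    (hAc : ∀ j ∉ A, L (Pi.single j 1) = Pi.single j (d j)) :
    L.det = ∏ i ∈ univ.filter (fun i => i ∉ A), d i := by
  set M := LinearMap.toMatrix' L
  have hM : ∀ i j, M i j = L (Pi.single j 1) i := fun i j => by
    simp [M, LinearMap.toMatrix'_apply]
  have hrow : ∀ i ∈ A, ∀ j, M i j = (1 : Matrix ι ι R) i j := fun i hi j => by
    rw [hM, hA i hi, Pi.single_apply, Matrix.one_apply]
  have hcol : ∀ i ∉ A, ∀ j ∉ A, M i j = Matrix.diagonal d i j := fun i _ j hj => by
    rw [hM, hAc j hj, Pi.single_apply, Matrix.diagonal_apply]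
    split_ifs with hij <;> simp [hij]
  rw [← LinearMap.det_toMatrix', Matrix.twoBlockTriangular_det' M (· ∈ A)]
  · have hblockA : M.toSquareBlockProp (· ∈ A) = 1 := by
      ext ⟨i, hi⟩ ⟨j, hj⟩
      simp only [Matrix.toSquareBlockProp, Matrix.toBlock_apply, hrow i hi, Matrix.one_apply,
        Subtype.mk.injEq]
    have hblockAc :
        M.toSquareBlockProp (· ∉ A) = Matrix.diagonal fun i : {i // i ∉ A} => d i := by
      ext ⟨i, hi⟩ ⟨j, hj⟩
      simp only [Matrix.toSquareBlockProp, Matrix.toBlock_apply, hcol i hi j hj,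
        Matrix.diagonal_apply, Subtype.mk.injEq]
    rw [hblockA, hblockAc, Matrix.det_one, one_mul, Matrix.det_diagonal]
    exact (Finset.prod_subtype _ (p := (· ∉ A)) (fun _ => by simp) d).symm
  · intro i hi j hj
    rw [hrow i hi, Matrix.one_apply_ne (by rintro rfl; exact hj hi)]

end LinearMap

namespace RealNVP

variable {ι : Type*} (A : Set ι) [DecidablePred (· ∈ A)]

/-- The paper's `b ⊙ y` for the mask `b` supported on `A`. -/
def coordMask (y : ι → ℝ) : ι → ℝ := fun i => if i ∈ A then y i else 0

noncomputable def couplingLayer (s t : (ι → ℝ) → ι → ℝ) (y : ι → ℝ) : ι → ℝ := fun i =>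
  if i ∈ A then y i else (y i - t (coordMask A y) i) * Real.exp (-(s (coordMask A y) i))

variable {A}

theorem differentiable_coordMask [Fintype ι] : Differentiable ℝ (coordMask A) := by
  refine differentiable_pi.2 fun i => ?_
  by_cases hi : i ∈ A <;> simp only [coordMask, hi, if_true, if_false] <;> fun_prop

theorem coordMask_add_smul_single [DecidableEq ι] {j : ι} (hj : j ∉ A) (y : ι → ℝ) (τ : ℝ) :
    coordMask A (y + τ • Pi.single j 1) = coordMask A y := by
  funext i
  by_cases hi : i ∈ A
  · have hij : i ≠ j := by rintro rfl; exact hj hi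
    simp [coordMask, hi, hij]
  · simp [coordMask, hi]

theorem couplingLayer_apply_of_mem (s t : (ι → ℝ) → ι → ℝ) {i : ι} (hi : i ∈ A) (y : ι → ℝ) :
    couplingLayer A s t y i = y i := if_pos hi

theorem differentiableAt_couplingLayer [Fintype ι] {s t : (ι → ℝ) → ι → ℝ} {y : ι → ℝ}
    (hs : DifferentiableAt ℝ s (coordMask A y)) (ht : DifferentiableAt ℝ t (coordMask A y)) :
    DifferentiableAt ℝ (couplingLayer A s t) y := by
  refine differentiableAt_pi.2 fun i => ?_
  have hsi := differentiableAt_pi.1 (hs.comp y differentiable_coordMask.differentiableAt) i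
  have hti := differentiableAt_pi.1 (ht.comp y differentiable_coordMask.differentiableAt) i
  by_cases hi : i ∈ A <;> simp only [couplingLayer, hi, if_true, if_false]
  · fun_prop
  · exact ((differentiableAt_apply i y).sub hti).mul hsi.neg.exp

theorem couplingLayer_add_smul_single [DecidableEq ι] (s t : (ι → ℝ) → ι → ℝ) {j : ι}
    (hj : j ∉ A) (y : ι → ℝ) (τ : ℝ) :
    couplingLayer A s t (y + τ • Pi.single j 1) =
      couplingLayer A s t y + τ • Pi.single j (Real.exp (-(s (coordMask A y) j))) := by
  funext i
  by_cases hi : i ∈ A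
  · have hij : i ≠ j := by rintro rfl; exact hj hi
    simp [couplingLayer, hi, hij]
  · by_cases hij : i = j
    · subst hij
      simp only [couplingLayer, hi, ↓reduceIte, Pi.add_apply, Pi.smul_apply, Pi.single_eq_same,
        smul_eq_mul, mul_one, coordMask_add_smul_single hj]
      ring
    · simp [couplingLayer, hi, hij, coordMask_add_smul_single hj]

end RealNVP

open RealNVP in
theorem realNVP_coupling_layer_jacobian_general
    (N : ℕ) (A : Set (Fin N)) [DecidablePred (· ∈ A)]
    (s t : (Fin N → ℝ) → (Fin N → ℝ))
    (hs : Differentiable ℝ s) (ht : Differentiable ℝ t) :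
    let mask : (Fin N → ℝ) → (Fin N → ℝ) := fun y i => if i ∈ A then y i else 0
    let f : (Fin N → ℝ) → (Fin N → ℝ) := fun y i =>
      if i ∈ A then y i else (y i - t (mask y) i) * Real.exp (-(s (mask y) i))
    ∀ y : Fin N → ℝ,
      DifferentiableAt ℝ f y ∧
      (fderiv ℝ f y).det
        = Real.exp (-(∑ i ∈ Finset.univ.filter (fun i : Fin N => i ∉ A), s (mask y) i)) := by
  intro mask f y
  have hf : DifferentiableAt ℝ (couplingLayer A s t) y :=
    differentiableAt_couplingLayer (hs _) (ht _)
  refine ⟨hf, ?_⟩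
  rw [← Finset.sum_neg_distrib, Real.exp_sum]
  exact LinearMap.det_eq_prod_of_apply_eq_self_of_apply_single _ A _
    (fun i hi => hf.hasFDerivAt.apply_apply_eq_of_apply_eq (couplingLayer_apply_of_mem s t hi))
    (fun j hj => hf.hasFDerivAt.apply_eq_of_add_smul (couplingLayer_add_smul_single s t hj y))

/-- Jacobian determinant of a RealNVP affine coupling layer: with masking set `A` and
differentiable scale and translation networks `s`, `t`, the coupling layer `f` is
differentiable everywhere and `det(Df(y)) = exp(−∑_{i∉A} s_i(b⊙y))`. -/
theorem realNVP_coupling_layer_jacobian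
    (N : ℕ) (hN : 0 < N) (A : Set (Fin N)) [DecidablePred (· ∈ A)]
    (s t : (Fin N → ℝ) → (Fin N → ℝ))
    (hs : Differentiable ℝ s) (ht : Differentiable ℝ t) :
    let mask : (Fin N → ℝ) → (Fin N → ℝ) := fun y i => if i ∈ A then y i else 0
    let f : (Fin N → ℝ) → (Fin N → ℝ) := fun y i =>
      if i ∈ A then y i else (y i - t (mask y) i) * Real.exp (-(s (mask y) i))
    ∀ y : Fin N → ℝ,
      DifferentiableAt ℝ f y ∧
      (fderiv ℝ f y).det
        = Real.exp (-(∑ i ∈ Finset.univ.filter (fun i : Fin N => i ∉ A), s (mask y) i)) :=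
  realNVP_coupling_layer_jacobian_general N A s t hs ht
end
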